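/- arXiv:1012.2950 — 8 statements merged into one kernel-verified Lean document; each statement's English description precedes it below -/
import Mathlib

section
/- If T is a tree on n vertices and k ≥ 1 is an integer, then the k-th power T^k has at least k·n − k(k+1)/2 edges. -/
/-!
A finite connected graph with at least two vertices has a vertex `v` whose deletion leaves it
connected. Distances between the other vertices can only shrink when `v` is put back, and `v` is
within distance `k` of at least `min k (n - 1)` other vertices: of all of them, or else of the
first `k` vertices of a geodesic leaving its `k`-ball. By induction on `n`, `G ^ k` has at least
`∑ i < n, min k i` edges, and this sum is at least `k * n - k * (k + 1) / 2`.
-/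

/-- The `k`-th power of a simple graph `G`: two distinct vertices are adjacent
iff their distance in `G` is at most `k`. -/
def SimpleGraph.power {V : Type*} (G : SimpleGraph V) (k : ℕ) : SimpleGraph V where
  Adj u v := u ≠ v ∧ G.dist u v ≤ k
  symm := ⟨fun u v h => ⟨h.1.symm, by rw [SimpleGraph.dist_comm]; exact h.2⟩⟩
  loopless := ⟨fun v h => h.1 rfl⟩

open Finset

lemma mul_sub_le_sum_range_min (k n : ℕ) :
    (k * n : ℝ) - k * (k + 1) / 2 ≤ ((∑ i ∈ range n, min k i : ℕ) : ℝ) := by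
  have hsplit : ∑ i ∈ range n, min k i + ∑ i ∈ range n, (k - i) = k * n := by
    rw [← sum_add_distrib, sum_congr rfl fun i _ => show min k i + (k - i) = k by omega]
    simp [mul_comm]
  have htail : ∑ i ∈ range n, (k - i) ≤ ∑ i ∈ range (k + 1), i :=
    calc ∑ i ∈ range n, (k - i) ≤ ∑ i ∈ range (k + 1), (k - i) :=
          sum_le_sum_of_ne_zero fun i _ hi => mem_range.mpr (by omega)
    _ = ∑ i ∈ range (k + 1), i := sum_range_reflect id (k + 1)
  have hgauss := sum_range_id_mul_two (k + 1)
  rw [Nat.add_sub_cancel] at hgauss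
  have h : 2 * (k * n) ≤ 2 * ∑ i ∈ range n, min k i + k * (k + 1) := by
    rw [mul_comm k (k + 1)]
    omega
  have h' : (2 * (k * n) : ℝ) ≤ 2 * ((∑ i ∈ range n, min k i : ℕ) : ℝ) + k * (k + 1) := by
    exact_mod_cast h
  linarith

namespace SimpleGraph

variable {V W : Type*} {G : SimpleGraph V} {u v : V}

lemma Reachable.dist_map_le {G' : SimpleGraph W} (f : G →g G') (h : G.Reachable u v) :
    G'.dist (f u) (f v) ≤ G.dist u v := by
  obtain ⟨p, hp⟩ := h.exists_walk_length_eq_dist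
  rw [← hp, ← p.length_map f]
  exact dist_le _

lemma Walk.dist_getVert_of_length_eq_dist (p : G.Walk u v) (hp : p.length = G.dist u v)
    {i : ℕ} (hi : i ≤ p.length) : G.dist u (p.getVert i) = i := by
  have h₁ : G.dist u (p.getVert i) ≤ i := by simpa [hi] using dist_le (p.take i)
  have h₂ : G.dist (p.getVert i) v ≤ p.length - i := by simpa using dist_le (p.drop i)
  have := (p.take i).reachable.dist_triangle_left v
  omega

lemma ncard_edgeSet_eq_ncard_edgeSet_induce_compl_singleton_add [Finite V] (H : SimpleGraph V)
    (v : V) : H.edgeSet.ncard = (H.induce {v}ᶜ).edgeSet.ncard + (H.neighborSet v).ncard := by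
  classical
  have := Fintype.ofFinite V
  have hdeg : H.degree v ≤ #H.edgeFinset := by
    rw [← card_incidenceFinset_eq_degree]
    exact card_le_card (H.incidenceFinset_subset v)
  rw [← coe_edgeFinset, Set.ncard_coe_finset, ← coe_edgeFinset, Set.ncard_coe_finset,
    Set.ncard_eq_toFinset_card', Set.toFinset_card, card_neighborSet_eq_degree,
    card_edgeFinset_induce_compl_singleton, card_edgeFinset_deleteIncidenceSet]
  omega

/-- Vertices unreachable from `v` have `G.dist v w = 0`, so they are neighbours of `v` in
`G.power k`. -/
lemma min_le_ncard_neighborSet_power [Finite V] (G : SimpleGraph V) (k : ℕ) (v : V) :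
    min k (Nat.card V - 1) ≤ ((G.power k).neighborSet v).ncard := by
  by_cases hfar : ∃ w, k < G.dist v w
  · obtain ⟨w, hw⟩ := hfar
    obtain ⟨p, hp⟩ :=
      (Reachable.of_dist_ne_zero (by omega : G.dist v w ≠ 0)).exists_walk_length_eq_dist
    have hdist : ∀ j ≤ k, G.dist v (p.getVert j) = j := fun j hj =>
      p.dist_getVert_of_length_eq_dist hp (by omega)
    calc min k (Nat.card V - 1) ≤ k := min_le_left _ _
    _ = (Set.Icc 1 k).ncard := by simp
    _ ≤ ((G.power k).neighborSet v).ncard := by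
      refine Set.ncard_le_ncard_of_injOn p.getVert ?_ ?_
      · rintro j ⟨hj₁, hj₂⟩
        refine ⟨fun h => ?_, (hdist j hj₂).trans_le hj₂⟩
        have := hdist j hj₂
        rw [← h, dist_self] at this
        omega
      · intro i hi j hj hij
        have := hdist i hi.2
        rwa [hij, hdist j hj.2, eq_comm] at this
  · push Not at hfar
    have hall : (G.power k).neighborSet v = {v}ᶜ := by
      ext w
      simp [power, hfar w, eq_comm]
    rw [hall, Set.ncard_compl, Set.ncard_singleton]
    exact min_le_right _ _

lemma power_induce_le_induce_power (s : Set V) (hs : (G.induce s).Preconnected) (k : ℕ) :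
    (G.induce s).power k ≤ (G.power k).induce s := by
  rintro x y ⟨hne, hxy⟩
  exact ⟨Subtype.coe_ne_coe.mpr hne, ((hs x y).dist_map_le (Embedding.induce s).toHom).trans hxy⟩

theorem Preconnected.sum_range_min_le_ncard_edgeSet_power [Finite V] (hG : G.Preconnected)
    (k : ℕ) : ∑ i ∈ range (Nat.card V), min k i ≤ (G.power k).edgeSet.ncard := by
  induction V using Finite.induction_subsingleton_or_nontrivial with
  | hbase V =>
    have : Nat.card V ≤ 1 := Finite.card_le_one_iff_subsingleton.mpr ‹_›
    interval_cases Nat.card V <;> simp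
  | hstep V ih =>
    obtain ⟨v, hv⟩ :=
      (Connected.mk hG).exists_connected_induce_compl_singleton_of_finite_nontrivial
    have hcard : Nat.card ({v}ᶜ : Set V) + 1 = Nat.card V := by
      rw [Nat.card_coe_set_eq, Set.ncard_compl, Set.ncard_singleton]
      have := Finite.card_pos (α := V)
      omega
    calc ∑ i ∈ range (Nat.card V), min k i
        = ∑ i ∈ range (Nat.card ({v}ᶜ : Set V)), min k i + min k (Nat.card V - 1) := by
          rw [← hcard, sum_range_succ, Nat.add_sub_cancel]
      _ ≤ ((G.induce {v}ᶜ).power k).edgeSet.ncard + ((G.power k).neighborSet v).ncard :=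
          add_le_add (ih _ (Finite.card_subtype_lt (not_not_intro rfl)) hv.preconnected)
            (min_le_ncard_neighborSet_power G k v)
      _ ≤ ((G.power k).induce {v}ᶜ).edgeSet.ncard + ((G.power k).neighborSet v).ncard := by
          gcongr
          · exact Set.toFinite _
          · exact power_induce_le_induce_power _ hv.preconnected k
      _ = (G.power k).edgeSet.ncard :=
          (ncard_edgeSet_eq_ncard_edgeSet_induce_compl_singleton_add _ v).symm

end SimpleGraph

theorem tree_power_edges_general {V : Type*} [Fintype V] (T : SimpleGraph V) (hT : T.IsTree)
    (k : ℕ) :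
    (k * (Fintype.card V) : ℝ) - k * (k + 1) / 2 ≤ ((T.power k).edgeSet.ncard : ℝ) := by
  have hedges := hT.connected.preconnected.sum_range_min_le_ncard_edgeSet_power k
  rw [Nat.card_eq_fintype_card] at hedges
  exact (mul_sub_le_sum_range_min k _).trans (by exact_mod_cast hedges)

theorem tree_power_edges {V : Type*} [Fintype V] (T : SimpleGraph V) (hT : T.IsTree)
    (k : ℕ) (hk : 1 ≤ k) :
    (k * (Fintype.card V) : ℝ) - k * (k + 1) / 2 ≤ ((T.power k).edgeSet.ncard : ℝ) :=
  tree_power_edges_general T hT k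
end

section
/- If G is a connected graph with minimum degree at least d ≥ 2 on n vertices with (8/3)d ≤ n ≤ 3d, then the degree sum of G^4 is at least (7/3)d·n. -/
open Finset

lemma Finset.card_add_card_add_card_le_card {α : Type*} [Fintype α] {s t u : Finset α}
    (hst : Disjoint s t) (hsu : Disjoint s u) (htu : Disjoint t u) :
    #s + #t + #u ≤ Fintype.card α := by
  classical
  rw [← card_union_of_disjoint hst,
    ← card_union_of_disjoint (disjoint_union_left.mpr ⟨hsu, htu⟩)]
  exact card_le_univ _

namespace SimpleGraph

variable {V : Type*} [Fintype V] (G : SimpleGraph V)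

noncomputable def closedBall (v : V) (r : ℕ) : Finset V := {w | G.dist v w ≤ r}

noncomputable def farPairs (k : ℕ) : Finset (V × V) := {p | k < G.dist p.1 p.2}

noncomputable def farNear (a : V) : Finset V := {w | (∃ z, 4 < G.dist w z) ∧ G.dist a w ≤ 2}

variable {G}

@[simp] lemma mem_closedBall {v w : V} {r : ℕ} : w ∈ G.closedBall v r ↔ G.dist v w ≤ r := by
  simp [closedBall]

@[simp] lemma mem_farPairs {k : ℕ} {p : V × V} : p ∈ G.farPairs k ↔ k < G.dist p.1 p.2 := by
  simp [farPairs]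

@[simp] lemma mem_farNear {a w : V} :
    w ∈ G.farNear a ↔ (∃ z, 4 < G.dist w z) ∧ G.dist a w ≤ 2 := by
  simp [farNear]

lemma ncard_power_neighborSet_add_card_filter [DecidableEq V] (k : ℕ) (v : V) :
    ((G.power k).neighborSet v).ncard + #{w | k < G.dist v w} + 1 = Fintype.card V := by
  have hset : (G.power k).neighborSet v = ↑((G.closedBall v k).erase v) := by
    ext w
    simp [power, eq_comm, and_comm]
  have hv : v ∈ G.closedBall v k := by simp
  rw [hset, Set.ncard_coe_finset, card_erase_of_mem hv, ← card_univ,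
    ← card_filter_add_card_filter_not (s := univ) (fun w => G.dist v w ≤ k)]
  have : 0 < #(G.closedBall v k) := card_pos.mpr ⟨v, hv⟩
  simp only [closedBall, not_le] at this ⊢
  omega

lemma sum_ncard_power_neighborSet_add_card_farPairs (k : ℕ) :
    ∑ v, ((G.power k).neighborSet v).ncard + #(G.farPairs k) + Fintype.card V
      = Fintype.card V ^ 2 := by
  classical
  have hpairs : #(G.farPairs k) = ∑ v, #{w | k < G.dist v w} := by
    simp only [farPairs, card_filter, ← univ_product_univ, sum_product]
  have h := sum_congr rfl fun v (_ : v ∈ univ) =>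
    ncard_power_neighborSet_add_card_filter (G := G) k v
  simp only [sum_add_distrib, sum_const, card_univ, smul_eq_mul, mul_one] at h
  rw [hpairs, sq, ← h]

lemma succ_le_card_closedBall_one {d : ℕ} {v : V} (hv : d ≤ (G.neighborSet v).ncard) :
    d + 1 ≤ #(G.closedBall v 1) := by
  have hsub : insert v (G.neighborSet v) ⊆ ↑(G.closedBall v 1) := by
    rintro w (rfl | hw)
    · simp
    · simp [dist_eq_one_iff_adj.mpr hw]
  have := Set.ncard_le_ncard hsub (Finset.finite_toSet _)
  rw [Set.ncard_insert_of_notMem (by simp) (Set.toFinite _), Set.ncard_coe_finset] at this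
  omega

section Connected

variable (hconn : G.Connected)
include hconn

lemma disjoint_closedBall {a b : V} {r s : ℕ} (h : r + s < G.dist a b) :
    Disjoint (G.closedBall a r) (G.closedBall b s) := by
  refine Finset.disjoint_left.mpr fun w ha hb => ?_
  have := hconn.dist_triangle (u := a) (v := w) (w := b)
  rw [mem_closedBall] at ha hb
  rw [dist_comm] at hb
  omega

lemma dist_le_four_of_mem_farNear {a w z : V} (hw : w ∈ G.farNear a) (hz : z ∈ G.farNear a) :
    G.dist w z ≤ 4 := by
  have haw := (mem_farNear.mp hw).2
  rw [dist_comm] at haw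
  have := hconn.dist_triangle (u := w) (v := a) (w := z)
  have := (mem_farNear.mp hz).2
  omega

variable {d : ℕ} (hmin : ∀ v, d ≤ (G.neighborSet v).ncard) (hn : Fintype.card V < 3 * (d + 1))
include hmin hn

lemma dist_le_two_of_three_le_dist {a b c : V} (hab : 3 ≤ G.dist a b) (hac : 3 ≤ G.dist a c) :
    G.dist b c ≤ 2 := by
  by_contra! hbc
  have := card_add_card_add_card_le_card (s := G.closedBall a 1) (t := G.closedBall b 1)
    (u := G.closedBall c 1) (disjoint_closedBall hconn (by omega))
    (disjoint_closedBall hconn (by omega)) (disjoint_closedBall hconn (by omega))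
  have := succ_le_card_closedBall_one (hmin a)
  have := succ_le_card_closedBall_one (hmin b)
  have := succ_le_card_closedBall_one (hmin c)
  omega

lemma disjoint_farNear_closedBall {a x y : V} (hay : 3 ≤ G.dist a y) (hxy : G.dist x y ≤ 1) :
    Disjoint (G.farNear a) (G.closedBall x 1) := by
  refine Finset.disjoint_left.mpr fun w hw hxw => ?_
  -- a partner `z` of `w` is at distance at least 3 from `a`, hence within distance 2 of `y`
  obtain ⟨⟨z, hwz⟩, haw⟩ := mem_farNear.mp hw
  rw [mem_closedBall, dist_comm] at hxw
  rw [dist_comm] at haw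
  have := hconn.dist_triangle (u := w) (v := a) (w := z)
  have hyz := dist_le_two_of_three_le_dist hconn hmin hn hay (c := z) (by omega)
  have := hconn.dist_triangle (u := w) (v := x) (w := y)
  have := hconn.dist_triangle (u := w) (v := y) (w := z)
  omega

lemma card_farNear_add_le {a b x y : V} (hab : 3 < G.dist a b) (hxb : 2 < G.dist x b)
    (hay : 3 ≤ G.dist a y) (hxy : G.dist x y ≤ 1) :
    #(G.farNear a) + 2 * (d + 1) ≤ Fintype.card V := by
  have hsub : G.farNear a ⊆ G.closedBall a 2 :=
    fun w hw => mem_closedBall.mpr (mem_farNear.mp hw).2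
  have := card_add_card_add_card_le_card (disjoint_farNear_closedBall hconn hmin hn hay hxy)
    ((disjoint_closedBall hconn (r := 2) (s := 1) (by omega)).mono_left hsub)
    (disjoint_closedBall hconn (r := 1) (s := 1) (by omega))
  have := succ_le_card_closedBall_one (hmin x)
  have := succ_le_card_closedBall_one (hmin b)
  omega

lemma card_farNear_add_le_of_walk {a b : V} (p : G.Walk a b) (hp : p.length = G.dist a b)
    (hab : 4 < G.dist a b) : #(G.farNear a) + 2 * (d + 1) ≤ Fintype.card V := by
  have hax := dist_le (p.take 2)
  have hxb := dist_le (p.drop 2)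
  have hyb := dist_le (p.drop 3)
  rw [Walk.take_length] at hax
  rw [Walk.drop_length] at hxb hyb
  have := hconn.dist_triangle (u := a) (v := p.getVert 2) (w := b)
  have := hconn.dist_triangle (u := a) (v := p.getVert 3) (w := b)
  have hxy : G.dist (p.getVert 2) (p.getVert 3) = 1 :=
    dist_eq_one_iff_adj.mpr (p.adj_getVert_succ (by omega))
  exact card_farNear_add_le hconn hmin hn (b := b) (by omega) (by omega) (by omega) hxy.le

lemma mem_farNear_or_mem_farNear {u v w z : V} (huv : 2 < G.dist u v) (hwz : 4 < G.dist w z) :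
    w ∈ G.farNear u ∨ w ∈ G.farNear v := by
  simp only [mem_farNear]
  by_cases huw : G.dist u w ≤ 2
  · exact .inl ⟨⟨z, hwz⟩, huw⟩
  · exact .inr ⟨⟨z, hwz⟩,
      dist_le_two_of_three_le_dist hconn hmin hn (a := u) (by omega) (by omega)⟩

lemma card_farPairs_le {u v : V} (huv : 2 < G.dist u v) :
    #(G.farPairs 4) ≤ 2 * #(G.farNear u) * #(G.farNear v) := by
  classical
  have hsub : G.farPairs 4 ⊆ G.farNear u ×ˢ G.farNear v ∪ G.farNear v ×ˢ G.farNear u := by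
    rintro ⟨w, z⟩ hwz
    rw [mem_farPairs] at hwz
    have hzw : 4 < G.dist z w := dist_comm (G := G) ▸ hwz
    rcases mem_farNear_or_mem_farNear hconn hmin hn huv hwz with hw | hw <;>
    rcases mem_farNear_or_mem_farNear hconn hmin hn huv hzw with hz | hz
    · exact absurd (dist_le_four_of_mem_farNear hconn hw hz) hwz.not_ge
    · exact mem_union_left _ (mem_product.mpr ⟨hw, hz⟩)
    · exact mem_union_right _ (mem_product.mpr ⟨hw, hz⟩)
    · exact absurd (dist_le_four_of_mem_farNear hconn hw hz) hwz.not_ge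
  calc #(G.farPairs 4) ≤ #(G.farNear u ×ˢ G.farNear v ∪ G.farNear v ×ˢ G.farNear u) :=
        card_le_card hsub
    _ ≤ #(G.farNear u ×ˢ G.farNear v) + #(G.farNear v ×ˢ G.farNear u) := card_union_le _ _
    _ = 2 * #(G.farNear u) * #(G.farNear v) := by rw [card_product, card_product]; ring

end Connected

end SimpleGraph

lemma seven_mul_mul_add_three_mul_le {n d p q F : ℕ} (hn1 : 8 * d ≤ 3 * n) (hn2 : n ≤ 3 * d)
    (hp : p + 2 * (d + 1) ≤ n) (hq : q + 2 * (d + 1) ≤ n)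
    (hF : F ≤ 2 * p * q) : 7 * d * n + 3 * F + 3 * n ≤ 3 * n ^ 2 := by
  have hpq : p * q ≤ (n - 2 * (d + 1)) ^ 2 := by
    rw [sq]; exact Nat.mul_le_mul (by omega) (by omega)
  zify [show 2 * (d + 1) ≤ n by omega] at *
  nlinarith

theorem avg_degree_fourth_power_boundary {V : Type*} [Fintype V] (G : SimpleGraph V) (d : ℕ)
    (hd : 2 ≤ d) (hconn : G.Connected) (hmin : ∀ v : V, d ≤ (G.neighborSet v).ncard)
    (hn1 : 8 * d ≤ 3 * Fintype.card V) (hn2 : Fintype.card V ≤ 3 * d) :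
    (7 / 3 * d * Fintype.card V : ℝ) ≤ ∑ v : V, (((G.power 4).neighborSet v).ncard : ℝ) := by
  have hn : Fintype.card V < 3 * (d + 1) := by omega
  suffices h : 7 * d * Fintype.card V + 3 * #(G.farPairs 4) + 3 * Fintype.card V
      ≤ 3 * Fintype.card V ^ 2 by
    have hcount : (∑ v, (((G.power 4).neighborSet v).ncard : ℝ)) + #(G.farPairs 4)
        + Fintype.card V = Fintype.card V ^ 2 := by
      exact_mod_cast G.sum_ncard_power_neighborSet_add_card_farPairs 4
    have h' : (7 * d * Fintype.card V + 3 * #(G.farPairs 4) + 3 * Fintype.card V : ℝ)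
        ≤ 3 * Fintype.card V ^ 2 := by
      exact_mod_cast h
    linarith
  rcases (G.farPairs 4).eq_empty_or_nonempty with hF | ⟨⟨u, v⟩, huv⟩
  · exact seven_mul_mul_add_three_mul_le (p := 0) (q := 0) hn1 hn2 (by omega) (by omega)
      (by simp [hF])
  · simp only [SimpleGraph.mem_farPairs] at huv
    obtain ⟨p, hp⟩ := hconn.exists_walk_length_eq_dist u v
    have hp' : p.reverse.length = G.dist v u := by
      rw [SimpleGraph.Walk.length_reverse, hp, SimpleGraph.dist_comm]
    exact seven_mul_mul_add_three_mul_le hn1 hn2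
      (SimpleGraph.card_farNear_add_le_of_walk hconn hmin hn p hp huv)
      (SimpleGraph.card_farNear_add_le_of_walk hconn hmin hn p.reverse hp'
        (SimpleGraph.dist_comm (G := G) ▸ huv))
      (SimpleGraph.card_farPairs_le hconn hmin hn (by omega))
end

section
/- If G is a connected d-regular graph on n vertices, then n ≥ (d+1)·diam(G)/3. -/
/-!
Along a shortest path `x₀, …, x_D` between two vertices at distance `D = diam G`, the vertices
`x₀, x₃, x₆, …` are pairwise at distance at least `3`, so their closed neighbourhoods are pairwise
disjoint. There are `⌊D / 3⌋ + 1` of them, each with at least `δ + 1` vertices when every degree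
is at least `δ`, hence `(⌊D / 3⌋ + 1)(δ + 1) ≤ n`.
-/

open Finset
namespace SimpleGraph

variable {V : Type*} {G : SimpleGraph V}

lemma Walk.sub_le_dist_getVert_of_length_eq_dist (hG : G.Connected) {u v : V}
    (p : G.Walk u v) (hp : p.length = G.dist u v) {i j : ℕ} (hj : j ≤ p.length) :
    j - i ≤ G.dist (p.getVert i) (p.getVert j) := by
  have hui : G.dist u (p.getVert i) ≤ i :=
    (dist_le (p.take i)).trans (by simp [Walk.take_length])
  have hjv : G.dist (p.getVert j) v ≤ p.length - j :=
    (dist_le (p.drop j)).trans (by simp [Walk.drop_length])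
  have := hG.dist_triangle (u := u) (v := p.getVert i) (w := v)
  have := hG.dist_triangle (u := p.getVert i) (v := p.getVert j) (w := v)
  omega

section closedNeighborhood

variable [DecidableEq V] [G.LocallyFinite]

lemma dist_le_one_of_mem_insert_neighborFinset {v w : V}
    (hw : w ∈ insert v (G.neighborFinset v)) : G.dist v w ≤ 1 := by
  rcases mem_insert.mp hw with rfl | hw
  · simp
  · exact (dist_eq_one_iff_adj.mpr ((mem_neighborFinset _ _ _).mp hw)).le

lemma disjoint_insert_neighborFinset_of_three_le_dist (hG : G.Connected) {a b : V}
    (hab : 3 ≤ G.dist a b) :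
    Disjoint (insert a (G.neighborFinset a)) (insert b (G.neighborFinset b)) := by
  refine Finset.disjoint_left.mpr fun w hwa hwb => ?_
  have := hG.dist_triangle (u := a) (v := w) (w := b)
  have := dist_le_one_of_mem_insert_neighborFinset hwa
  have := dist_le_one_of_mem_insert_neighborFinset hwb
  rw [dist_comm (u := w)] at *
  omega

lemma card_insert_neighborFinset (v : V) :
    #(insert v (G.neighborFinset v)) = G.degree v + 1 := by
  rw [card_insert_of_notMem (by simp), card_neighborFinset_eq_degree]

end closedNeighborhood

lemma card_mul_succ_le_card_of_pairwiseDisjoint [Fintype V] [DecidableEq V] [DecidableRel G.Adj]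
    {δ : ℕ} (hδ : ∀ v, δ ≤ G.degree v) {ι : Type*} (s : Finset ι) (c : ι → V)
    (hs : (s : Set ι).PairwiseDisjoint fun i => insert (c i) (G.neighborFinset (c i))) :
    #s * (δ + 1) ≤ Fintype.card V :=
  calc #s * (δ + 1)
      ≤ ∑ i ∈ s, #(insert (c i) (G.neighborFinset (c i))) := by
        rw [← smul_eq_mul]
        exact card_nsmul_le_sum _ _ _ fun i _ => by
          rw [card_insert_neighborFinset]; exact Nat.succ_le_succ (hδ _)
    _ = #(s.biUnion fun i => insert (c i) (G.neighborFinset (c i))) := (card_biUnion hs).symm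
    _ ≤ Fintype.card V := card_le_univ _

theorem succ_mul_diam_le_three_mul_card [Fintype V] [DecidableRel G.Adj] {δ : ℕ}
    (hδ : ∀ v, δ ≤ G.degree v) : (δ + 1) * G.diam ≤ 3 * Fintype.card V := by
  classical
  rcases eq_or_ne G.diam 0 with h0 | h0
  · simp [h0]
  have := G.nontrivial_of_diam_ne_zero h0
  have hG : G.Connected := G.connected_of_ediam_ne_top (G.ediam_ne_top_of_diam_ne_zero h0)
  obtain ⟨u, v, huv⟩ := G.exists_dist_eq_diam
  obtain ⟨p, hp⟩ := hG.exists_walk_length_eq_dist u v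
  have hdisj : (range (G.diam / 3 + 1) : Set ℕ).PairwiseDisjoint fun i =>
      insert (p.getVert (3 * i)) (G.neighborFinset (p.getVert (3 * i))) := by
    intro i hi j hj hij
    wlog h : i < j generalizing i j
    · exact (this hj hi hij.symm (by omega)).symm
    simp only [coe_range, Set.mem_Iio] at hj
    refine disjoint_insert_neighborFinset_of_three_le_dist hG ?_
    have := p.sub_le_dist_getVert_of_length_eq_dist hG hp (i := 3 * i) (j := 3 * j) (by omega)
    omega
  have hpack := card_mul_succ_le_card_of_pairwiseDisjoint hδ _ _ hdisj
  rw [card_range] at hpack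
  have hdiam : G.diam ≤ 3 * (G.diam / 3 + 1) := by omega
  calc (δ + 1) * G.diam ≤ (δ + 1) * (3 * (G.diam / 3 + 1)) := Nat.mul_le_mul_left _ hdiam
    _ = 3 * ((G.diam / 3 + 1) * (δ + 1)) := by ring
    _ ≤ 3 * Fintype.card V := Nat.mul_le_mul_left _ hpack

end SimpleGraph

theorem card_ge_diam_bound_general {V : Type*} [Fintype V] (G : SimpleGraph V) (d : ℕ)
    (hreg : ∀ v : V, (G.neighborSet v).ncard = d) :
    (d + 1) * G.diam ≤ 3 * Fintype.card V := by
  classical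
  refine G.succ_mul_diam_le_three_mul_card fun v => (hreg v).symm.le.trans ?_
  rw [← G.card_neighborSet_eq_degree, ← Nat.card_eq_fintype_card, Nat.card_coe_set_eq]

theorem card_ge_diam_bound {V : Type*} [Fintype V] (G : SimpleGraph V) (d : ℕ)
    (hconn : G.Connected) (hreg : ∀ v : V, (G.neighborSet v).ncard = d) :
    (d + 1) * G.diam ≤ 3 * Fintype.card V :=
  card_ge_diam_bound_general G d hreg
end

section
/- Let G be a connected graph with minimum degree at least d and let v be a vertex with B_2(v) ≠ V(G). Then the degree of v in G^4 is at least 2d. -/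
namespace SimpleGraph

variable {V : Type*} {G : SimpleGraph V}

theorem exists_dist_eq_of_le_dist {u v : V} {k : ℕ} (hk : k ≤ G.dist u v) :
    ∃ w, G.dist u w = k := by
  rcases Nat.eq_zero_or_pos k with rfl | hk₀
  · exact ⟨u, dist_self⟩
  have huv : G.Reachable u v := Reachable.of_dist_ne_zero (by omega)
  obtain ⟨p, hp⟩ := huv.exists_walk_length_eq_dist
  refine ⟨p.getVert k, le_antisymm ?_ ?_⟩
  · simpa [Walk.take_length, hp, hk] using G.dist_le (p.take k)
  · have h_drop : G.dist (p.getVert k) v ≤ p.length - k := Walk.drop_length p k ▸ G.dist_le _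
    have h_tri := (p.take k).reachable.dist_triangle_left v
    omega

theorem disjoint_neighborSet_of_two_lt_dist {u v : V} (h : 2 < G.dist u v) :
    Disjoint (G.neighborSet u) (G.neighborSet v) :=
  Set.disjoint_left.2 fun _ hux hvx =>
    h.not_ge <| G.dist_le ((Walk.nil.cons hvx.symm).cons hux)

theorem power_adj_of_adj {v w x : V} {k : ℕ} (hvw : G.Reachable v w) (hk : G.dist v w < k)
    (hwx : G.Adj w x) (hvx : v ≠ x) : (G.power k).Adj v x := by
  refine ⟨hvx, (hvw.dist_triangle_left x).trans ?_⟩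
  rw [dist_eq_one_iff_adj.2 hwx]
  omega

end SimpleGraph

open SimpleGraph in
theorem degree_fourth_power_ge_two_d_general {V : Type*} [Fintype V] (G : SimpleGraph V) (d : ℕ)
    (hmin : ∀ v : V, d ≤ (G.neighborSet v).ncard)
    (v : V) (hv : {u : V | G.dist u v ≤ 2} ≠ Set.univ) :
    2 * d ≤ ((G.power 4).neighborSet v).ncard := by
  obtain ⟨u, hu⟩ : ∃ u, 2 < G.dist v u := by
    simpa [Set.eq_univ_iff_forall, dist_comm] using hv
  obtain ⟨w, hw⟩ := exists_dist_eq_of_le_dist (k := 3) hu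
  have hvw : G.Reachable v w := Reachable.of_dist_ne_zero (by omega)
  have hsub : G.neighborSet v ∪ G.neighborSet w ⊆ (G.power 4).neighborSet v := by
    rintro x (hx | hx)
    · exact power_adj_of_adj (Reachable.refl v) (by simp) hx hx.ne
    · refine power_adj_of_adj hvw (by omega) hx fun hvx => ?_
      have hwv : G.dist w v = 1 := dist_eq_one_iff_adj.2 (hvx ▸ hx)
      rw [dist_comm] at hwv
      omega
  calc 2 * d ≤ (G.neighborSet v).ncard + (G.neighborSet w).ncard := by
        linarith [hmin v, hmin w]
    _ = (G.neighborSet v ∪ G.neighborSet w).ncard :=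
        (Set.ncard_union_eq (disjoint_neighborSet_of_two_lt_dist (by omega))).symm
    _ ≤ ((G.power 4).neighborSet v).ncard := Set.ncard_le_ncard hsub

theorem degree_fourth_power_ge_two_d {V : Type*} [Fintype V] (G : SimpleGraph V) (d : ℕ)
    (hconn : G.Connected) (hmin : ∀ v : V, d ≤ (G.neighborSet v).ncard)
    (v : V) (hv : {u : V | G.dist u v ≤ 2} ≠ Set.univ) :
    2 * d ≤ ((G.power 4).neighborSet v).ncard :=
  degree_fourth_power_ge_two_d_general G d hmin v hv
end

section
/- Let G be a connected graph with minimum degree at least d, and let u, v, v' be vertices with dist(v,v') ≥ 3 and dist(u,v) = dist(u,v') = 3. Then the degree of u in G^4 is at least 3d. -/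
/-!
The centres `u`, `v`, `v'` are pairwise at distance `≥ 3`, so their neighbourhoods are pairwise
disjoint, and by the triangle inequality every neighbour of `v` or `v'` lies within distance `4`
of `u` without being `u`. Three disjoint sets of size `≥ d` inside `N_{G⁴}(u)` give `3d`.
-/

namespace SimpleGraph

variable {V : Type*} {G : SimpleGraph V} {u v : V} {k : ℕ}

theorem disjoint_neighborSet_of_three_le_dist (h : 3 ≤ G.dist u v) :
    Disjoint (G.neighborSet u) (G.neighborSet v) := by
  refine Set.disjoint_left.mpr fun w huw hvw => ?_
  have : G.dist u v ≤ 2 := G.dist_le (.cons huw (.cons hvw.symm .nil))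
  omega

theorem le_power (hk : 1 ≤ k) : G ≤ G.power k :=
  fun _ _ h => ⟨h.ne, (dist_eq_one_iff_adj.mpr h).trans_le hk⟩

theorem neighborSet_subset_power_neighborSet (hv : 2 ≤ G.dist u v) (hk : G.dist u v + 1 ≤ k) :
    G.neighborSet v ⊆ (G.power k).neighborSet u := by
  intro w hvw
  have hreach : G.Reachable u v := Reachable.of_dist_ne_zero (by omega)
  have huw := hreach.dist_triangle_left w
  rw [dist_eq_one_iff_adj.mpr hvw] at huw
  refine ⟨?_, by omega⟩
  rintro rfl
  rw [dist_eq_one_iff_adj.mpr hvw.symm] at hv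
  omega

end SimpleGraph

theorem degree_fourth_power_ge_three_d_general {V : Type*} [Fintype V] (G : SimpleGraph V) (d : ℕ)
    (hmin : ∀ w : V, d ≤ (G.neighborSet w).ncard)
    (u v v' : V) (hvv' : 3 ≤ G.dist v v') (huv : G.dist u v = 3) (huv' : G.dist u v' = 3) :
    3 * d ≤ ((G.power 4).neighborSet u).ncard := by
  have hsub : G.neighborSet u ∪ G.neighborSet v ∪ G.neighborSet v' ⊆
      (G.power 4).neighborSet u :=
    Set.union_subset
      (Set.union_subset (G.neighborSet_mono (G.le_power (by norm_num)) u)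
        (G.neighborSet_subset_power_neighborSet (by omega) (by omega)))
      (G.neighborSet_subset_power_neighborSet (by omega) (by omega))
  have huv_disj := G.disjoint_neighborSet_of_three_le_dist huv.ge
  have huv'_disj := G.disjoint_neighborSet_of_three_le_dist huv'.ge
  have hvv'_disj := G.disjoint_neighborSet_of_three_le_dist hvv'
  calc 3 * d ≤ (G.neighborSet u).ncard + (G.neighborSet v).ncard + (G.neighborSet v').ncard := by
        linarith [hmin u, hmin v, hmin v']
    _ = (G.neighborSet u ∪ G.neighborSet v ∪ G.neighborSet v').ncard := by
        rw [Set.ncard_union_eq (Set.disjoint_union_left.mpr ⟨huv'_disj, hvv'_disj⟩),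
          Set.ncard_union_eq huv_disj]
    _ ≤ ((G.power 4).neighborSet u).ncard := Set.ncard_le_ncard hsub

theorem degree_fourth_power_ge_three_d {V : Type*} [Fintype V] (G : SimpleGraph V) (d : ℕ)
    (hconn : G.Connected) (hmin : ∀ w : V, d ≤ (G.neighborSet w).ncard)
    (u v v' : V) (hvv' : 3 ≤ G.dist v v') (huv : G.dist u v = 3) (huv' : G.dist u v' = 3) :
    3 * d ≤ ((G.power 4).neighborSet u).ncard :=
  degree_fourth_power_ge_three_d_general G d hmin u v v' hvv' huv huv'
end

section
/- Let Γ be a finite group and A ⊆ Γ a symmetric generating set containing the identity (A = A^{-1}, 1 ∈ A). If k is a positive integer with A^k ≠ Γ, then |A^k| ≥ (2k+1)|A|/3. -/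
open Pointwise

namespace CayleyGrowthAux

variable {Γ : Type*} [Group Γ] [Fintype Γ] [DecidableEq Γ]

/-- Admissible set for the isoperimetric problem. -/
def adm (A X : Finset Γ) : Prop := X.Nonempty ∧ X * A ≠ Finset.univ

/-- Boundary size. -/
def bnd (A X : Finset Γ) : ℕ := (X * A).card - X.card

/-- Connectivity κ. -/
noncomputable def kap (A : Finset Γ) : ℕ := sInf {n | ∃ X, adm A X ∧ bnd A X = n}

def frag (A X : Finset Γ) : Prop := adm A X ∧ bnd A X = kap A

noncomputable def atomCard (A : Finset Γ) : ℕ := sInf {n | ∃ X, frag A X ∧ X.card = n}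

def isAtom (A X : Finset Γ) : Prop := frag A X ∧ X.card = atomCard A

variable {A : Finset Γ}

omit [Fintype Γ] in
theorem subset_mulA (hone : (1:Γ) ∈ A) (X : Finset Γ) : X ⊆ X * A := fun x hx => by
  have := Finset.mul_mem_mul hx hone; simpa using this

omit [Fintype Γ] in
theorem card_bnd (hone : (1:Γ) ∈ A) (X : Finset Γ) :
    (X * A).card = X.card + bnd A X :=
  (Nat.add_sub_cancel' (Finset.card_le_card (subset_mulA hone X))).symm

theorem adm_one (hA : A ≠ Finset.univ) : adm A ({1} : Finset Γ) := by
  refine ⟨Finset.singleton_nonempty 1, ?_⟩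
  rw [Finset.singleton_mul, one_smul]; exact hA

theorem kap_le {X : Finset Γ} (hX : adm A X) : kap A ≤ bnd A X :=
  Nat.sInf_le ⟨X, hX, rfl⟩

theorem card_kap_le (hone : (1:Γ) ∈ A) {X : Finset Γ} (hX : adm A X) :
    X.card + kap A ≤ (X * A).card := by
  rw [card_bnd hone X]
  exact Nat.add_le_add_left (kap_le hX) _

theorem exists_frag (hA : A ≠ Finset.univ) : ∃ X, frag A X := by
  have hne : {n | ∃ X, adm A X ∧ bnd A X = n}.Nonempty := ⟨_, ⟨{1}, adm_one hA, rfl⟩⟩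
  obtain ⟨X, hX, hb⟩ := Nat.sInf_mem hne
  exact ⟨X, hX, hb⟩

theorem exists_atom (hA : A ≠ Finset.univ) : ∃ X, isAtom A X := by
  have hne : {n | ∃ X, frag A X ∧ X.card = n}.Nonempty := by
    obtain ⟨X, hX⟩ := exists_frag hA
    exact ⟨X.card, X, hX, rfl⟩
  obtain ⟨X, hX, hc⟩ := Nat.sInf_mem hne
  exact ⟨X, hX, hc⟩

theorem atomCard_le {X : Finset Γ} (hX : frag A X) : atomCard A ≤ X.card :=
  Nat.sInf_le ⟨X, hX, rfl⟩

theorem smul_adm (g : Γ) {X : Finset Γ} (hX : adm A X) : adm A (g • X) := by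
  refine ⟨hX.1.smul_finset, ?_⟩
  rw [smul_mul_assoc]
  intro h
  apply hX.2
  apply Finset.eq_univ_of_card
  have h2 : (g • (X * A)).card = (Finset.univ : Finset Γ).card := by rw [h]
  rw [Finset.card_smul_finset] at h2
  rw [h2, Finset.card_univ]

omit [Fintype Γ] in
theorem smul_bnd (g : Γ) (X : Finset Γ) : bnd A (g • X) = bnd A X := by
  unfold bnd
  rw [smul_mul_assoc, Finset.card_smul_finset, Finset.card_smul_finset]

theorem isAtom_smul (g : Γ) {X : Finset Γ} (hX : isAtom A X) : isAtom A (g • X) :=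
  ⟨⟨smul_adm g hX.1.1, by rw [smul_bnd]; exact hX.1.2⟩,
    by rw [Finset.card_smul_finset]; exact hX.2⟩

/-- Key lemma (Hamidoune): intersecting atoms are equal, for symmetric `A` with `1 ∈ A`. -/
theorem atom_inter (hone : (1:Γ) ∈ A) (hsymm : A⁻¹ = A)
    {X Y : Finset Γ} (hX : isAtom A X) (hY : isAtom A Y)
    (hXY : (X ∩ Y).Nonempty) : X = Y := by
  obtain ⟨⟨hXadm, hXfrag⟩, hXcard⟩ := hX
  obtain ⟨⟨hYadm, hYfrag⟩, hYcard⟩ := hY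
  have hXA : (X * A).card = X.card + kap A := by rw [card_bnd hone, hXfrag]
  have hYA : (Y * A).card = Y.card + kap A := by rw [card_bnd hone, hYfrag]
  have hsubI : (X ∩ Y) * A ⊆ X * A := Finset.mul_subset_mul_right Finset.inter_subset_left
  have hinter_adm : adm A (X ∩ Y) :=
    ⟨hXY, fun h => hXadm.2 (Finset.univ_subset_iff.1 (h ▸ hsubI))⟩
  have hIA : (X ∩ Y).card + kap A ≤ ((X ∩ Y) * A).card := card_kap_le hone hinter_adm
  have hinter2 : (X ∩ Y) * A ⊆ (X * A) ∩ (Y * A) := Finset.inter_mul_subset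
  have hIA2 : (X ∩ Y).card + kap A ≤ ((X * A) ∩ (Y * A)).card :=
    hIA.trans (Finset.card_le_card hinter2)
  have hium := Finset.card_union_add_card_inter (X * A) (Y * A)
  by_cases hcup : (X ∪ Y) * A = Finset.univ
  · -- dual case: derive a contradiction
    exfalso
    set Xs := (X * A)ᶜ with hXsdef
    have hXsne : Xs.Nonempty := by
      rw [Finset.nonempty_iff_ne_empty]
      intro hemp
      rw [hXsdef] at hemp
      exact hXadm.2 ((Finset.compl_eq_empty_iff _).1 hemp)
    have hdisj : ∀ x ∈ X, x ∉ Xs * A := by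
      intro x hx hmem
      rw [Finset.mem_mul] at hmem
      obtain ⟨y, hy, b, hb, hyb⟩ := hmem
      rw [hXsdef, Finset.mem_compl] at hy
      apply hy
      have hbinv : b⁻¹ ∈ A := by rw [← hsymm]; exact Finset.inv_mem_inv hb
      have : x * b⁻¹ ∈ X * A := Finset.mul_mem_mul hx hbinv
      have hyx : y = x * b⁻¹ := by rw [← hyb]; group
      rwa [hyx]
    have hXsadm : adm A Xs := by
      refine ⟨hXsne, fun h => ?_⟩
      obtain ⟨x, hx⟩ := hXadm.1
      exact hdisj x hx (h ▸ Finset.mem_univ x)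
    have hXsub : Xs * A ⊆ Xs ∪ ((X * A) \ X) := by
      intro z hz
      by_cases hz1 : z ∈ X * A
      · refine Finset.mem_union_right _ (Finset.mem_sdiff.2 ⟨hz1, ?_⟩)
        intro hzX; exact hdisj z hzX hz
      · exact Finset.mem_union_left _ (by rw [hXsdef, Finset.mem_compl]; exact hz1)
    have hXscard : (Xs * A).card ≤ Xs.card + kap A := by
      calc (Xs * A).card ≤ (Xs ∪ ((X * A) \ X)).card := Finset.card_le_card hXsub
        _ ≤ Xs.card + ((X * A) \ X).card := Finset.card_union_le _ _
        _ = Xs.card + kap A := by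
            rw [Finset.card_sdiff_of_subset (subset_mulA hone X), hXA]; omega
    have hbXs : bnd A Xs ≤ kap A := by
      have h1 := card_bnd hone Xs
      omega
    have hXsfrag : frag A Xs := ⟨hXsadm, le_antisymm hbXs (kap_le hXsadm)⟩
    have hXsbig : atomCard A ≤ Xs.card := atomCard_le hXsfrag
    have hcount1 : (X * A).card + Xs.card = Fintype.card Γ := by
      rw [hXsdef]; exact Finset.card_add_card_compl _
    have huni : ((X * A) ∪ (Y * A)).card = Fintype.card Γ := by
      rw [← Finset.union_mul, hcup, Finset.card_univ]
    have h1le : 1 ≤ (X ∩ Y).card := Finset.card_pos.2 hXY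
    omega
  · -- submodular case
    have hcupadm : adm A (X ∪ Y) := by
      refine ⟨?_, hcup⟩
      obtain ⟨x, hx⟩ := hXadm.1
      exact ⟨x, Finset.mem_union_left _ hx⟩
    have hU : (X ∪ Y).card + kap A ≤ ((X ∪ Y) * A).card := card_kap_le hone hcupadm
    have h3 : ((X ∪ Y) * A).card = ((X * A) ∪ (Y * A)).card := by rw [Finset.union_mul]
    have hii := Finset.card_union_add_card_inter X Y
    have h2 : ((X ∩ Y) * A).card ≤ ((X * A) ∩ (Y * A)).card :=
      Finset.card_le_card hinter2
    have h1 := card_bnd hone (X ∩ Y)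
    have hbI : bnd A (X ∩ Y) ≤ kap A := by omega
    have hIfrag : frag A (X ∩ Y) := ⟨hinter_adm, le_antisymm hbI (kap_le hinter_adm)⟩
    have hIcard : atomCard A ≤ (X ∩ Y).card := atomCard_le hIfrag
    have hXeq : X ∩ Y = X :=
      Finset.eq_of_subset_of_card_le Finset.inter_subset_left (by omega)
    have hYeq : X ∩ Y = Y :=
      Finset.eq_of_subset_of_card_le Finset.inter_subset_right (by omega)
    rw [← hXeq, hYeq]

/-- There is an atom which is a subgroup (as a finset) containing 1. -/
theorem exists_atom_subgroup (hone : (1:Γ) ∈ A) (hsymm : A⁻¹ = A) (hA : A ≠ Finset.univ) :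
    ∃ K : Finset Γ, isAtom A K ∧ (1:Γ) ∈ K ∧
      (∀ x ∈ K, ∀ y ∈ K, x * y ∈ K) ∧ (∀ x ∈ K, x⁻¹ ∈ K) := by
  obtain ⟨X₀, hX₀⟩ := exists_atom hA
  obtain ⟨x₀, hx₀⟩ := hX₀.1.1.1
  set K : Finset Γ := x₀⁻¹ • X₀ with hKdef
  have hKatom : isAtom A K := isAtom_smul _ hX₀
  have h1K : (1:Γ) ∈ K := Finset.mem_smul_finset.2 ⟨x₀, hx₀, by simp⟩
  have htrans : ∀ h ∈ K, h • K = K := by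
    intro h hh
    refine atom_inter hone hsymm (isAtom_smul h hKatom) hKatom
      ⟨h, Finset.mem_inter.2 ⟨?_, hh⟩⟩
    exact Finset.mem_smul_finset.2 ⟨1, h1K, by simp⟩
  have hmul : ∀ x ∈ K, ∀ y ∈ K, x * y ∈ K := by
    intro x hx y hy
    rw [← htrans x hx]
    exact Finset.mem_smul_finset.2 ⟨y, hy, rfl⟩
  have hinv : ∀ x ∈ K, x⁻¹ ∈ K := by
    intro x hx
    have h1 : (1:Γ) ∈ x • K := by rw [htrans x hx]; exact h1K
    obtain ⟨y, hy, hxy⟩ := Finset.mem_smul_finset.1 h1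
    have hxy' : x * y = 1 := by simpa using hxy
    have : y = x⁻¹ := (inv_eq_of_mul_eq_one_right hxy').symm
    rwa [this] at hy
  exact ⟨K, hKatom, h1K, hmul, hinv⟩

/-- The central estimate: `2|A| ≤ 3κ`. -/
theorem key (hone : (1:Γ) ∈ A) (hsymm : A⁻¹ = A)
    (hgen : Subgroup.closure (A : Set Γ) = ⊤) (hA : A ≠ Finset.univ) :
    2 * A.card ≤ 3 * kap A := by
  obtain ⟨K, hKatom, h1K, hmul, hinv⟩ := exists_atom_subgroup hone hsymm hA
  obtain ⟨⟨hKadm, hKfrag⟩, _hKcard⟩ := hKatom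
  have hKA : (K * A).card = K.card + kap A := by rw [card_bnd hone, hKfrag]
  have hKAne : K * A ≠ Finset.univ := hKadm.2
  have hAsub : A ⊆ K * A := fun b hb => by
    have := Finset.mul_mem_mul h1K hb; simpa using this
  have hAle : A.card ≤ K.card + kap A := hKA ▸ Finset.card_le_card hAsub
  -- A \ K is nonempty
  have hAK : ∃ a ∈ A, a ∉ K := by
    by_contra h
    push_neg at h
    let KS : Subgroup Γ :=
      { carrier := ↑K
        mul_mem' := fun {x y} hx hy => hmul x hx y hy
        one_mem' := h1K
        inv_mem' := fun {x} hx => hinv x hx }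
    have hle : Subgroup.closure (A : Set Γ) ≤ KS :=
      (Subgroup.closure_le KS).2 (fun x hx => Finset.mem_coe.2 (h x (Finset.mem_coe.1 hx)))
    rw [hgen] at hle
    apply hKAne
    apply Finset.univ_subset_iff.1
    intro x _
    have hxK : x ∈ K := by
      have hxKS : x ∈ KS := hle (Subgroup.mem_top x)
      exact Finset.mem_coe.1 hxKS
    have := Finset.mul_mem_mul hxK hone
    simpa using this
  obtain ⟨a, haA, haK⟩ := hAK
  -- κ ≥ |K| : K and Ka are disjoint subsets of K*A
  have hdKKa : Disjoint K (K.image (fun x => x * a)) := by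
    rw [Finset.disjoint_left]
    intro x hxK hxKa
    obtain ⟨kk, hk, hkeq⟩ := Finset.mem_image.1 hxKa
    apply haK
    have : kk⁻¹ * x ∈ K := hmul _ (hinv _ hk) _ hxK
    have ha' : kk⁻¹ * x = a := by rw [← hkeq]; group
    rwa [ha'] at this
  have hKaSub : K.image (fun x => x * a) ⊆ K * A := by
    intro z hz
    obtain ⟨kk, hk, hkeq⟩ := Finset.mem_image.1 hz
    rw [← hkeq]
    exact Finset.mul_mem_mul hk haA
  have hKsub' : K ⊆ K * A := subset_mulA hone K
  have hcard_img : (K.image (fun x => x * a)).card = K.card :=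
    Finset.card_image_of_injective _ (mul_left_injective a)
  have hκK : K.card ≤ kap A := by
    have hsub : K ∪ K.image (fun x => x * a) ⊆ K * A :=
      Finset.union_subset hKsub' hKaSub
    have := Finset.card_le_card hsub
    rw [Finset.card_union_of_disjoint hdKKa, hcard_img, hKA] at this
    omega
  by_cases hcase : ∃ b ∈ A, b ∉ K ∧ ∀ kk ∈ K, b ≠ kk * a
  · -- three disjoint cosets K, Ka, Kb inside K*A
    obtain ⟨b, hbA, hbK, hbKa⟩ := hcase
    have hdKKb : Disjoint K (K.image (fun x => x * b)) := by
      rw [Finset.disjoint_left]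
      intro x hxK hxKb
      obtain ⟨kk, hk, hkeq⟩ := Finset.mem_image.1 hxKb
      apply hbK
      have : kk⁻¹ * x ∈ K := hmul _ (hinv _ hk) _ hxK
      have hb' : kk⁻¹ * x = b := by rw [← hkeq]; group
      rwa [hb'] at this
    have hdKaKb : Disjoint (K.image (fun x => x * a)) (K.image (fun x => x * b)) := by
      rw [Finset.disjoint_left]
      intro x hxKa hxKb
      obtain ⟨kk, hk, hkeq⟩ := Finset.mem_image.1 hxKa
      obtain ⟨kk', hk', hkeq'⟩ := Finset.mem_image.1 hxKb
      refine hbKa (kk'⁻¹ * kk) (hmul _ (hinv _ hk') _ hk) ?_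
      have heq : kk * a = kk' * b := by rw [hkeq, hkeq']
      rw [mul_assoc, heq]
      group
    have hKbSub : K.image (fun x => x * b) ⊆ K * A := by
      intro z hz
      obtain ⟨kk, hk, hkeq⟩ := Finset.mem_image.1 hz
      rw [← hkeq]
      exact Finset.mul_mem_mul hk hbA
    have hcard_imgb : (K.image (fun x => x * b)).card = K.card :=
      Finset.card_image_of_injective _ (mul_left_injective b)
    have hsub3 : (K ∪ K.image (fun x => x * a)) ∪ K.image (fun x => x * b) ⊆ K * A :=
      Finset.union_subset (Finset.union_subset hKsub' hKaSub) hKbSub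
    have hd3 : Disjoint (K ∪ K.image (fun x => x * a)) (K.image (fun x => x * b)) :=
      Finset.disjoint_union_left.2 ⟨hdKKb, hdKaKb⟩
    have hc3 := Finset.card_le_card hsub3
    rw [Finset.card_union_of_disjoint hd3, Finset.card_union_of_disjoint hdKKa,
      hcard_img, hcard_imgb, hKA] at hc3
    -- 3|K| ≤ |K| + κ, so 2|K| ≤ κ; also |A| ≤ |K| + κ
    omega
  · -- all of A \ K lies in the single coset Ka
    push_neg at hcase
    have hInKa : ∀ b ∈ A, b ∉ K → ∃ kk ∈ K, b = kk * a := by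
      intro b hb hbK
      obtain ⟨kk, hk, hkeq⟩ := hcase b hb hbK
      exact ⟨kk, hk, hkeq⟩
    have hainv : a⁻¹ ∈ A := by rw [← hsymm]; exact Finset.inv_mem_inv haA
    have hainvK : a⁻¹ ∉ K := fun h => haK (by simpa using hinv _ h)
    obtain ⟨k0, hk0, hk0eq⟩ := hInKa a⁻¹ hainv hainvK
    have haa : a * a ∈ K := by
      have hkval : k0 = a⁻¹ * a⁻¹ := by
        have h' : a⁻¹ * a⁻¹ = k0 * a * a⁻¹ := by rw [← hk0eq]
        rw [h']; group
      have h2 : a * a = k0⁻¹ := by rw [hkval, mul_inv_rev, inv_inv]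
      rw [h2]; exact hinv _ hk0
    set U : Finset Γ := K.filter (fun x => a * x * a⁻¹ ∈ K) with hUdef
    have hUsubK : U ⊆ K := Finset.filter_subset _ _
    have hUmem : ∀ x, x ∈ U ↔ (x ∈ K ∧ a * x * a⁻¹ ∈ K) := fun x => Finset.mem_filter
    have hUmul : ∀ x ∈ U, ∀ y ∈ U, x * y ∈ U := by
      intro x hx y hy
      rw [hUmem] at hx hy ⊢
      refine ⟨hmul _ hx.1 _ hy.1, ?_⟩
      have : a * (x * y) * a⁻¹ = (a * x * a⁻¹) * (a * y * a⁻¹) := by group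
      rw [this]
      exact hmul _ hx.2 _ hy.2
    have hUinv : ∀ x ∈ U, x⁻¹ ∈ U := by
      intro x hx
      rw [hUmem] at hx ⊢
      refine ⟨hinv _ hx.1, ?_⟩
      have : a * x⁻¹ * a⁻¹ = (a * x * a⁻¹)⁻¹ := by group
      rw [this]
      exact hinv _ hx.2
    -- A is covered by K ∪ U·a
    have hAcover : A ⊆ K ∪ U.image (fun x => x * a) := by
      intro b hb
      by_cases hbK : b ∈ K
      · exact Finset.mem_union_left _ hbK
      · refine Finset.mem_union_right _ ?_
        obtain ⟨k1, hk1, hbeq⟩ := hInKa b hb hbK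
        have hbinvA : b⁻¹ ∈ A := by rw [← hsymm]; exact Finset.inv_mem_inv hb
        have hbinvK : b⁻¹ ∉ K := fun h => hbK (by simpa using hinv _ h)
        obtain ⟨k2, hk2, hbinveq⟩ := hInKa b⁻¹ hbinvA hbinvK
        -- b = k1 * a, b⁻¹ = k2 * a  ⇒  a * b = (a·(k2·a)⁻¹... compute: a*b = (b⁻¹*a⁻¹)⁻¹ = (k2 * a * a⁻¹)... 
        have habK : a * b ∈ K := by
          have : a * b = (k2 * a * a⁻¹)⁻¹ := by rw [← hbinveq]; group
          rw [this]
          have : k2 * a * a⁻¹ = k2 := by group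
          rw [this]
          exact hinv _ hk2
        refine Finset.mem_image.2 ⟨k1, ?_, hbeq.symm⟩
        rw [hUmem]
        refine ⟨hk1, ?_⟩
        have hrw : a * k1 * a⁻¹ = (a * b) * (a * a)⁻¹ := by rw [hbeq]; group
        rw [hrw]
        exact hmul _ habK _ (hinv _ haa)
    have hAcard2 : A.card ≤ K.card + U.card := by
      calc A.card ≤ (K ∪ U.image (fun x => x * a)).card := Finset.card_le_card hAcover
        _ ≤ K.card + (U.image (fun x => x * a)).card := Finset.card_union_le _ _
        _ = K.card + U.card := by
            rw [Finset.card_image_of_injective _ (mul_left_injective a)]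
    by_cases hUK : U = K
    · -- conjugation-stable: K ∪ Ka is a subgroup containing A, contradiction
      exfalso
      have hconj : ∀ x ∈ K, a * x * a⁻¹ ∈ K := by
        intro x hx
        rw [← hUK] at hx
        exact ((hUmem x).1 hx).2
      have hinj : Function.Injective (fun x : Γ => a * x * a⁻¹) := by
        intro x y hxy
        simp only at hxy
        have := mul_right_cancel hxy
        exact mul_left_cancel this
      have himg : K.image (fun x => a * x * a⁻¹) = K := by
        apply Finset.eq_of_subset_of_card_le
        · intro z hz
          obtain ⟨x, hx, hxeq⟩ := Finset.mem_image.1 hz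
          rw [← hxeq]; exact hconj x hx
        · rw [Finset.card_image_of_injective _ hinj]
      have hconj' : ∀ x ∈ K, a⁻¹ * x * a ∈ K := by
        intro x hx
        rw [← himg] at hx
        obtain ⟨y, hy, hyx⟩ := Finset.mem_image.1 hx
        have : a⁻¹ * x * a = y := by rw [← hyx]; group
        rw [this]; exact hy
      set N : Finset Γ := K ∪ K.image (fun x => x * a) with hNdef
      have hmemN : ∀ z, z ∈ N ↔ (z ∈ K ∨ ∃ kk ∈ K, z = kk * a) := by
        intro z
        rw [hNdef, Finset.mem_union, Finset.mem_image]
        constructor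
        · rintro (h | ⟨kk, hk, hkeq⟩)
          · exact Or.inl h
          · exact Or.inr ⟨kk, hk, hkeq.symm⟩
        · rintro (h | ⟨kk, hk, hkeq⟩)
          · exact Or.inl h
          · exact Or.inr ⟨kk, hk, hkeq.symm⟩
      have h1N : (1:Γ) ∈ N := (hmemN 1).2 (Or.inl h1K)
      have hNmul : ∀ x ∈ N, ∀ y ∈ N, x * y ∈ N := by
        intro x hx y hy
        rw [hmemN] at hx hy ⊢
        rcases hx with hx | ⟨kx, hkx, rfl⟩
        · rcases hy with hy | ⟨ky, hky, rfl⟩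
          · exact Or.inl (hmul _ hx _ hy)
          · refine Or.inr ⟨x * ky, hmul _ hx _ hky, by group⟩
        · rcases hy with hy | ⟨ky, hky, rfl⟩
          · refine Or.inr ⟨kx * (a * y * a⁻¹), hmul _ hkx _ (hconj _ hy), by group⟩
          · refine Or.inl ?_
            have hrw : kx * a * (ky * a) = kx * (a * ky * a⁻¹) * (a * a) := by group
            rw [hrw]
            exact hmul _ (hmul _ hkx _ (hconj _ hky)) _ haa
      have hNinv : ∀ x ∈ N, x⁻¹ ∈ N := by
        intro x hx
        rw [hmemN] at hx ⊢
        rcases hx with hx | ⟨kx, hkx, rfl⟩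
        · exact Or.inl (hinv _ hx)
        · refine Or.inr ⟨(a⁻¹ * kx⁻¹ * a) * k0, hmul _ (hconj' _ (hinv _ hkx)) _ hk0, ?_⟩
          -- (kx * a)⁻¹ = a⁻¹ kx⁻¹ = (a⁻¹ kx⁻¹ a) * a⁻¹ = (a⁻¹ kx⁻¹ a) * (k0 * a)
          rw [mul_assoc, ← hk0eq]
          group
      let NS : Subgroup Γ :=
        { carrier := ↑N
          mul_mem' := fun {x y} hx hy => hNmul x hx y hy
          one_mem' := h1N
          inv_mem' := fun {x} hx => hNinv x hx }
      have hAN : A ⊆ N := by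
        intro b hb
        have := hAcover hb
        rw [Finset.mem_union] at this
        rcases this with h | h
        · exact (hmemN b).2 (Or.inl h)
        · obtain ⟨u, hu, hueq⟩ := Finset.mem_image.1 h
          exact (hmemN b).2 (Or.inr ⟨u, hUsubK hu, hueq.symm⟩)
      have hle : Subgroup.closure (A : Set Γ) ≤ NS :=
        (Subgroup.closure_le NS).2 (fun x hx => by exact_mod_cast hAN hx)
      rw [hgen] at hle
      apply hKAne
      apply Finset.univ_subset_iff.1
      intro x _
      have hxN : x ∈ N := by
        have : x ∈ NS := hle (Subgroup.mem_top x)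
        exact_mod_cast this
      rw [hmemN] at hxN
      rcases hxN with h | ⟨kk, hk, rfl⟩
      · exact hKsub' h
      · exact Finset.mul_mem_mul hk haA
    · -- U is a proper subgroup of K: 2|U| ≤ |K|
      have hg : ∃ g ∈ K, g ∉ U := by
        by_contra h
        push_neg at h
        exact hUK (Finset.Subset.antisymm hUsubK h)
      obtain ⟨g, hgK, hgU⟩ := hg
      have hdisjU : Disjoint U (U.image (fun x => x * g)) := by
        rw [Finset.disjoint_left]
        intro x hxU hxUg
        obtain ⟨u, hu, hueq⟩ := Finset.mem_image.1 hxUg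
        apply hgU
        have : u⁻¹ * x ∈ U := hUmul _ (hUinv _ hu) _ hxU
        have hg' : u⁻¹ * x = g := by rw [← hueq]; group
        rwa [hg'] at this
      have hUgsub : U ∪ U.image (fun x => x * g) ⊆ K := by
        refine Finset.union_subset hUsubK ?_
        intro z hz
        obtain ⟨u, hu, hueq⟩ := Finset.mem_image.1 hz
        rw [← hueq]
        exact hmul _ (hUsubK hu) _ hgK
      have h2U : 2 * U.card ≤ K.card := by
        have := Finset.card_le_card hUgsub
        rw [Finset.card_union_of_disjoint hdisjU,
          Finset.card_image_of_injective _ (mul_left_injective g)] at this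
        omega
      omega

theorem chain (hone : (1:Γ) ∈ A) {k : ℕ} (hk : 0 < k)
    (hne : (A ^ k : Finset Γ) ≠ Finset.univ) :
    A.card + (k - 1) * kap A ≤ (A ^ k : Finset Γ).card := by
  suffices h : ∀ j, 1 ≤ j → j ≤ k → A.card + (j - 1) * kap A ≤ (A ^ j : Finset Γ).card from
    h k hk le_rfl
  intro j hj1 hjk
  induction j with
  | zero => omega
  | succ n ih =>
    rcases Nat.eq_or_lt_of_le hj1 with h1 | h1
    · -- n + 1 = 1
      have hn0 : n = 0 := by omega
      subst hn0
      simp [pow_one]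
    · -- n ≥ 1
      have hn1 : 1 ≤ n := by omega
      have hnk : n ≤ k := by omega
      have ihn := ih hn1 hnk
      have hadm : adm A (A ^ n : Finset Γ) := by
        constructor
        · exact ⟨1, Finset.one_mem_pow hone⟩
        · intro h
          apply hne
          have hsub : (A ^ (n+1) : Finset Γ) ⊆ A ^ k :=
            Finset.pow_subset_pow_right hone (by omega)
          rw [pow_succ, h] at hsub
          exact Finset.univ_subset_iff.1 hsub
      have hstep := card_kap_le hone hadm
      rw [← pow_succ] at hstep
      have harith : (n + 1 - 1) * kap A = (n - 1) * kap A + kap A := by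
        have : n + 1 - 1 = (n - 1) + 1 := by omega
        rw [this, add_mul, one_mul]
      omega

end CayleyGrowthAux

open CayleyGrowthAux in
theorem cayley_product_growth {Γ : Type*} [Group Γ] [Fintype Γ] [DecidableEq Γ]
    (A : Finset Γ) (hone : (1 : Γ) ∈ A) (hsymm : A⁻¹ = A)
    (hgen : Subgroup.closure (A : Set Γ) = ⊤)
    (k : ℕ) (hk : 0 < k) (hne : (A ^ k : Finset Γ) ≠ Finset.univ) :
    (2 * k + 1) * A.card ≤ 3 * (A ^ k).card := by
  have hsubAk : A ⊆ A ^ k := by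
    have := Finset.pow_subset_pow_right hone hk
    simpa using this
  have hA : A ≠ Finset.univ := by
    intro h
    apply hne
    apply Finset.univ_subset_iff.1
    intro x _
    have hxA : x ∈ A := by rw [h]; exact Finset.mem_univ x
    exact hsubAk hxA
  have hkey : 2 * A.card ≤ 3 * kap A := key hone hsymm hgen hA
  have hchain := chain hone hk hne
  have h2 : (k - 1) * (2 * A.card) ≤ (k - 1) * (3 * kap A) :=
    Nat.mul_le_mul_left _ hkey
  have h3 : 3 * (A.card + (k - 1) * kap A) ≤ 3 * (A ^ k).card := Nat.mul_le_mul_left _ hchain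
  have hk1 : k - 1 + 1 = k := Nat.succ_pred_eq_of_pos hk
  -- (2k+1)|A| = 3|A| + 2(k-1)|A| ≤ 3|A| + 3(k-1)κ = 3(|A| + (k-1)κ) ≤ 3|A^k|
  have hexp : (2 * k + 1) * A.card = 3 * A.card + (k - 1) * (2 * A.card) := by
    have : 2 * k + 1 = 3 + (k - 1) * 2 := by omega
    rw [this]; ring
  rw [hexp]
  calc 3 * A.card + (k - 1) * (2 * A.card)
      ≤ 3 * A.card + (k - 1) * (3 * kap A) := by omega
    _ = 3 * (A.card + (k - 1) * kap A) := by ring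
    _ ≤ 3 * (A ^ k).card := h3
end

section
/- For every odd d > 1 and positive integer t, the graph H_t (defined below) is d-regular, connected, and has (t+1)(d+1) + 2 vertices. -/
/-!
`H_t` is the path on the `3t + 3` blocks with every block blown up into a small graph: consecutive
blocks are completely joined, so the degree of a vertex is the total size of the neighbouring
blocks plus its degree inside its own block. The block sizes `2, d-1, 1, 1, d-1, …, d-1, 2` and the
inner graphs (`K_2`, `K_{d-1}` minus a perfect matching, `K_{d-1}`, `K_1`) are chosen so that this
sum is `d` everywhere; `d - 1` is even, so the perfect matching exists. Since every block is
nonempty, connectivity comes from the path.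
-/

/-- Size of the block `X_{j-1}` of the graph `H_t` (blocks are indexed by
`j = i + 1` where `i ∈ {-1, 0, …, 3t+1}` is the index from the paper):
`X_{-1}` and `X_{3t+1}` have two vertices, blocks `X_{3i}` for `0 ≤ i ≤ t`
have `d - 1` vertices, and the remaining blocks are single vertices. -/
def blockSize (t d j : ℕ) : ℕ :=
  if j = 0 ∨ j = 3 * t + 2 then 2
  else if (j - 1) % 3 = 0 then d - 1 else 1

/-- The graph `H_t` from Figure 2: consecutive blocks are completely joined;
`X_{-1}` and `X_{3t+1}` induce `K_2`; the blocks `X_0` and `X_{3t}` induce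
`K_{d-1}` minus a perfect matching (vertices `2m` and `2m+1` are the matched,
hence non-adjacent, pairs); the interior blocks `X_{3i}` (`1 ≤ i ≤ t-1`)
induce `K_{d-1}`; all other blocks are single vertices. -/
def Ht (t d : ℕ) : SimpleGraph (Σ j : Fin (3 * t + 3), Fin (blockSize t d j.val)) where
  Adj u v :=
    (u.1.val + 1 = v.1.val ∨ v.1.val + 1 = u.1.val) ∨
      (u.1 = v.1 ∧ u.2.val ≠ v.2.val ∧
        ((u.1.val = 1 ∨ u.1.val = 3 * t + 1) → u.2.val / 2 ≠ v.2.val / 2))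
  symm := by
    constructor
    rintro ⟨j, p⟩ ⟨j', q⟩ h
    rcases h with h | ⟨h1, h2, h3⟩
    · exact Or.inl h.symm
    · subst h1
      exact Or.inr ⟨rfl, h2.symm, fun hj => (h3 hj).symm⟩
  loopless := by
    constructor
    rintro ⟨j, p⟩ h
    rcases h with h | ⟨-, h2, -⟩
    · omega
    · exact h2 rfl

namespace SimpleGraph

variable {ι : Type*} {V : ι → Type*}

/-- The generalized lexicographic product `H[Gᵢ]` (also called the `H`-join of the `Gᵢ`). -/
def sigmaLex (H : SimpleGraph ι) (G : ∀ i, SimpleGraph (V i)) : SimpleGraph (Σ i, V i) where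
  Adj := Sigma.Lex H.Adj fun i => (G i).Adj
  symm := by
    constructor
    rintro _ _ (⟨_, _, h⟩ | ⟨_, _, h⟩)
    · exact .left _ _ h.symm
    · exact .right _ _ h.symm
  loopless := by
    constructor
    rintro _ (⟨_, _, h⟩ | ⟨_, _, h⟩)
    · exact H.loopless.irrefl _ h
    · exact (G _).loopless.irrefl _ h

variable {H : SimpleGraph ι} {G : ∀ i, SimpleGraph (V i)}

instance [DecidableEq ι] [DecidableRel H.Adj] [∀ i, DecidableRel (G i).Adj] :
    DecidableRel (sigmaLex H G).Adj :=
  Sigma.Lex.decidable _ _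

theorem sigmaLex_adj_of_adj {i j : ι} (h : H.Adj i j) (p : V i) (q : V j) :
    (sigmaLex H G).Adj ⟨i, p⟩ ⟨j, q⟩ :=
  .left _ _ h

theorem neighborFinset_sigmaLex [Fintype ι] [DecidableEq ι] [DecidableRel H.Adj]
    [∀ i, Fintype (V i)] [∀ i, DecidableEq (V i)] [∀ i, DecidableRel (G i).Adj] (i : ι) (p : V i) :
    (sigmaLex H G).neighborFinset ⟨i, p⟩ =
      (H.neighborFinset i).sigma (fun _ => Finset.univ) ∪
        ((G i).neighborFinset p).map (Function.Embedding.sigmaMk i) := by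
  ext ⟨j, q⟩
  simp only [mem_neighborFinset, Finset.mem_union, Finset.mem_sigma, Finset.mem_univ, and_true,
    Finset.mem_map, Function.Embedding.sigmaMk_apply]
  constructor
  · rintro (⟨_, _, h⟩ | ⟨_, _, h⟩)
    · exact .inl h
    · exact .inr ⟨_, h, rfl⟩
  · rintro (h | ⟨q, h, ⟨⟩⟩)
    · exact .left _ _ h
    · exact .right _ _ h

theorem degree_sigmaLex [Fintype ι] [DecidableEq ι] [DecidableRel H.Adj]
    [∀ i, Fintype (V i)] [∀ i, DecidableEq (V i)] [∀ i, DecidableRel (G i).Adj] (i : ι) (p : V i) :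
    (sigmaLex H G).degree ⟨i, p⟩ =
      ∑ j ∈ H.neighborFinset i, Fintype.card (V j) + (G i).degree p := by
  rw [← card_neighborFinset_eq_degree, neighborFinset_sigmaLex, Finset.card_union_of_disjoint,
    Finset.card_sigma, Finset.card_map, card_neighborFinset_eq_degree]
  · rfl
  · simp only [Finset.disjoint_left, Finset.mem_sigma, mem_neighborFinset, Finset.mem_map]
    rintro _ ⟨h, -⟩ ⟨q, -, rfl⟩
    exact H.loopless.irrefl _ h

theorem Preconnected.sigmaLex [Nontrivial ι] [∀ i, Nonempty (V i)] (hH : H.Preconnected) :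
    (sigmaLex H G).Preconnected := by
  rintro ⟨i, p⟩ ⟨j, q⟩
  obtain ⟨w⟩ := hH i j
  induction w with
  | nil =>
    -- two vertices of one block are joined through a vertex of a neighbouring block
    obtain ⟨k, hk⟩ := hH.exists_adj_of_nontrivial _
    exact (sigmaLex_adj_of_adj (G := G) hk p (Classical.arbitrary _)).reachable.trans
      (sigmaLex_adj_of_adj hk.symm _ q).reachable
  | cons h _ ih =>
    exact (sigmaLex_adj_of_adj h p (Classical.arbitrary _)).reachable.trans (ih _ q)

theorem Connected.sigmaLex [Nontrivial ι] [∀ i, Nonempty (V i)] (hH : H.Connected) :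
    (sigmaLex H G).Connected :=
  have ⟨i⟩ := hH.nonempty
  have : Nonempty (Σ i, V i) := ⟨⟨i, Classical.arbitrary _⟩⟩
  ⟨hH.preconnected.sigmaLex⟩

theorem ncard_neighborSet_eq_degree {W : Type*} (G : SimpleGraph W) (v : W)
    [Fintype (G.neighborSet v)] : (G.neighborSet v).ncard = G.degree v := by
  rw [← coe_neighborFinset, Set.ncard_coe_finset, card_neighborFinset_eq_degree]

theorem sum_neighborFinset_pathGraph {M : Type*} [AddCommMonoid M] {n : ℕ}
    [DecidableRel (pathGraph n).Adj] (f : ℕ → M) (j : Fin n) :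
    ∑ k ∈ (pathGraph n).neighborFinset j, f k =
      (if 0 < j.val then f (j - 1) else 0) + (if j.val + 1 < n then f (j + 1) else 0) := by
  have hsum : ∀ a c, ∑ k : Fin n, (if k.val = a then c else 0) = if a < n then c else (0 : M) := by
    intro a c
    simp only [Fin.sum_univ_eq_sum_range (fun k => if k = a then c else 0), Finset.sum_ite_eq',
      Finset.mem_range]
  have hsplit : ∀ k : Fin n, (if (pathGraph n).Adj j k then f k else 0) =
      (if 0 < j.val then if k.val = j - 1 then f (j - 1) else 0 else 0) +
        (if k.val = j + 1 then f (j + 1) else 0) := by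
    intro k
    simp only [pathGraph_adj]
    split_ifs <;> first | omega | simp_all
  rw [neighborFinset_eq_filter, Finset.sum_filter, Finset.sum_congr rfl fun k _ => hsplit k,
    Finset.sum_add_distrib, hsum]
  by_cases h0 : 0 < j.val
  · simp only [h0, if_true, hsum, show j.val - 1 < n by omega]
  · simp only [h0, if_false, Finset.sum_const_zero]

def cocktailPartyGraph (m : ℕ) : SimpleGraph (Fin m) where
  Adj p q := p.val / 2 ≠ q.val / 2
  symm := ⟨fun _ _ h => Ne.symm h⟩
  loopless := ⟨fun _ h => h rfl⟩

instance (m : ℕ) : DecidableRel (cocktailPartyGraph m).Adj :=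
  fun p q => inferInstanceAs (Decidable (p.val / 2 ≠ q.val / 2))

theorem degree_cocktailPartyGraph {m : ℕ} (hm : Even m) (p : Fin m) :
    (cocktailPartyGraph m).degree p = m - 2 := by
  obtain ⟨r, rfl⟩ := hm
  have hp := p.isLt
  have hmatch : (Finset.univ.filter fun q : Fin (r + r) => p.val / 2 = q.val / 2) =
      {⟨2 * (p.val / 2), by omega⟩, ⟨2 * (p.val / 2) + 1, by omega⟩} := by
    ext q
    simp only [Finset.mem_filter, Finset.mem_univ, true_and, Finset.mem_insert,
      Finset.mem_singleton, Fin.ext_iff]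
    omega
  have hsplit := Finset.card_filter_add_card_filter_not (s := Finset.univ)
    (p := fun q : Fin (r + r) => p.val / 2 = q.val / 2)
  rw [hmatch, Finset.card_pair (by simp [Fin.ext_iff]), Finset.card_univ, Fintype.card_fin]
    at hsplit
  rw [← card_neighborFinset_eq_degree, neighborFinset_eq_filter]
  exact Nat.eq_sub_of_add_eq' hsplit

end SimpleGraph

open SimpleGraph

theorem blockSize_pos {t d : ℕ} (hd : 1 < d) (j : ℕ) : 0 < blockSize t d j := by
  unfold blockSize
  split_ifs <;> omega

theorem sum_range_ite_mod_three (t a b : ℕ) :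
    ∑ k ∈ Finset.range (3 * t + 1), (if k % 3 = 0 then a else b) = (t + 1) * a + 2 * t * b := by
  induction t with
  | zero => simp
  | succ t ih =>
    rw [show 3 * (t + 1) + 1 = 3 * t + 1 + 1 + 1 + 1 by ring, Finset.sum_range_succ,
      Finset.sum_range_succ, Finset.sum_range_succ, ih, if_neg (by omega), if_neg (by omega),
      if_pos (by omega)]
    ring

theorem sum_blockSize {t d : ℕ} (hd : 1 ≤ d) :
    ∑ j ∈ Finset.range (3 * t + 3), blockSize t d j = (t + 1) * (d + 1) + 2 := by
  have hinner : ∀ k ∈ Finset.range (3 * t + 1),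
      blockSize t d (k + 1) = if k % 3 = 0 then d - 1 else 1 := by
    intro k hk
    rw [Finset.mem_range] at hk
    rw [blockSize, if_neg (by omega), Nat.add_sub_cancel]
  rw [show 3 * t + 3 = 3 * t + 1 + 1 + 1 by ring, Finset.sum_range_succ, Finset.sum_range_succ',
    Finset.sum_congr rfl hinner, sum_range_ite_mod_three]
  simp only [blockSize, true_or, or_true, if_true]
  obtain ⟨e, rfl⟩ : ∃ e, d = e + 1 := ⟨d - 1, by omega⟩
  simp only [Nat.add_sub_cancel]
  ring

def HtBlock (t d j : ℕ) : SimpleGraph (Fin (blockSize t d j)) where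
  Adj p q := p ≠ q ∧ ((j = 1 ∨ j = 3 * t + 1) → p.val / 2 ≠ q.val / 2)
  symm := ⟨fun _ _ h => ⟨h.1.symm, fun hj => (h.2 hj).symm⟩⟩
  loopless := ⟨fun _ h => h.1 rfl⟩

@[simp]
theorem HtBlock_adj {t d j : ℕ} {p q : Fin (blockSize t d j)} :
    (HtBlock t d j).Adj p q ↔ p ≠ q ∧ ((j = 1 ∨ j = 3 * t + 1) → p.val / 2 ≠ q.val / 2) :=
  Iff.rfl

theorem Ht_eq_sigmaLex (t d : ℕ) :
    Ht t d = sigmaLex (pathGraph (3 * t + 3)) fun j => HtBlock t d j := by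
  ext ⟨j, p⟩ ⟨j', q⟩
  constructor
  · rintro (h | ⟨rfl, hne, h⟩)
    · exact .left _ _ (pathGraph_adj.2 h)
    · exact .right _ _ (HtBlock_adj.2 ⟨Fin.val_ne_iff.1 hne, h⟩)
  · rintro (⟨_, _, h⟩ | ⟨_, _, h⟩)
    · exact .inl (pathGraph_adj.1 h)
    · exact .inr ⟨rfl, Fin.val_ne_iff.2 (HtBlock_adj.1 h).1, (HtBlock_adj.1 h).2⟩

theorem ncard_neighborSet_HtBlock {t d j : ℕ} (hodd : Odd d) (p : Fin (blockSize t d j)) :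
    ((HtBlock t d j).neighborSet p).ncard =
      if j = 1 ∨ j = 3 * t + 1 then blockSize t d j - 2 else blockSize t d j - 1 := by
  split_ifs with hj
  · have hsize : blockSize t d j = d - 1 := by
      rw [blockSize, if_neg (by omega), if_pos (by omega)]
    have hblock : HtBlock t d j = cocktailPartyGraph _ := by
      ext p q
      exact ⟨fun h => h.2 hj, fun h => ⟨ne_of_apply_ne (fun r : Fin _ => r.val / 2) h, fun _ => h⟩⟩
    rw [hblock, ncard_neighborSet_eq_degree,
      degree_cocktailPartyGraph (hsize ▸ Nat.Odd.sub_odd hodd odd_one)]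
  · have hblock : HtBlock t d j = ⊤ := by
      ext p q
      simp [hj]
    rw [hblock, ncard_neighborSet_eq_degree, complete_graph_degree, Fintype.card_fin]

theorem ncard_neighborSet_Ht {t d : ℕ} (hodd : Odd d) (hd : 1 < d) (ht : 0 < t) (v) :
    ((Ht t d).neighborSet v).ncard = d := by
  classical
  obtain ⟨j, p⟩ := v
  rw [Ht_eq_sigmaLex, ncard_neighborSet_eq_degree, degree_sigmaLex]
  simp only [Fintype.card_fin]
  rw [sum_neighborFinset_pathGraph (blockSize t d), ← ncard_neighborSet_eq_degree,
    ncard_neighborSet_HtBlock hodd]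
  have := j.isLt
  obtain ⟨k, rfl⟩ := hodd
  simp only [blockSize, Nat.add_eq_zero_iff, one_ne_zero, and_false, false_or]
  split_ifs <;> omega

theorem Ht_regular_connected_card (d t : ℕ) (hodd : Odd d) (hd : 1 < d) (ht : 0 < t) :
    (∀ v, ((Ht t d).neighborSet v).ncard = d) ∧ (Ht t d).Connected ∧
      Fintype.card (Σ j : Fin (3 * t + 3), Fin (blockSize t d j.val)) =
        (t + 1) * (d + 1) + 2 := by
  have : ∀ j, Nonempty (Fin (blockSize t d j)) := fun j => ⟨⟨0, blockSize_pos hd j⟩⟩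
  refine ⟨ncard_neighborSet_Ht hodd hd ht, ?_, ?_⟩
  · rw [Ht_eq_sigmaLex]
    exact (pathGraph_connected _).sigmaLex
  · rw [Fintype.card_sigma]
    simp only [Fintype.card_fin]
    rw [Fin.sum_univ_eq_sum_range (blockSize t d), sum_blockSize hd.le]
end

section
/- Let G be a connected graph on n vertices with minimum degree at least d ≥ 2 such that 8d ≤ 3n ≤ 9d, and suppose there exist vertices v₃, v₄ at distance 1 with B_2(v₃) ∪ B_2(v₄) = V(G), where v₃, v₄ lie on a geodesic path v₁…v₆ of length 5. Let A = B_2(v₃) ∖ B_2(v₄) and C = B_2(v₄) ∖ B_2(v₃), with a = |A|, c = |C|. Then a ≤ n − 2(d+1) and c ≤ n − 2(d+1), and the degree sum of G^4 is at least n(n−1) − 2ac ≥ (7/3)d·n. -/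
/-!
Closed neighbourhoods have at least `d + 1` vertices and `3 (d + 1) > n`, so no three vertices
are pairwise at distance at least `3`. Along the geodesic `v₁ … v₆` this puts the closed
neighbourhood of `v₆` inside `B₂(v₄)` (otherwise `v₁`, `v₄` and a neighbour of `v₆` would be
pairwise far apart), and that neighbourhood is disjoint from the one of `v₃ ∈ B₁(v₄)`. Hence
`|B₂(v₄)| ≥ 2 (d + 1)`, i.e. `a ≤ n - 2 (d + 1)`, and symmetrically for `c`. Two vertices in a
common ball `B₂(vᵢ)` are adjacent in `G⁴`, so every non-edge of `G⁴` joins `A` to `C`; there are at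
most `2ac` ordered non-adjacent pairs. The last inequality is quadratic arithmetic in the range
`8d ≤ 3n ≤ 9d`.
-/

namespace SimpleGraph

variable {V : Type*} {G : SimpleGraph V}

lemma succ_le_ncard_setOf_dist_le_one [Finite V] {d : ℕ}
    (hmin : ∀ v, d ≤ (G.neighborSet v).ncard) (u : V) :
    d + 1 ≤ {x | G.dist x u ≤ 1}.ncard := by
  grw [hmin u, ← Set.ncard_insert_of_notMem G.notMem_neighborSet_self]
  refine Set.ncard_le_ncard ?_
  rintro x (rfl | hx)
  · simp
  · simp [dist_eq_one_iff_adj.2 hx.symm]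

lemma dist_le_four_of_dist_le_two (hconn : G.Connected) {x y z : V}
    (hx : G.dist x z ≤ 2) (hy : G.dist y z ≤ 2) : G.dist x y ≤ 4 := by
  have := hconn.dist_triangle (u := x) (v := z) (w := y)
  rw [dist_comm (u := z) (v := y)] at this
  omega

lemma disjoint_setOf_dist_le_one (hconn : G.Connected) {p q : V} (hpq : 3 ≤ G.dist p q) :
    Disjoint {x | G.dist x p ≤ 1} {x | G.dist x q ≤ 1} := by
  refine Set.disjoint_left.2 fun x hp hq => ?_
  have := hconn.dist_triangle (u := p) (v := x) (w := q)
  rw [dist_comm (u := p) (v := x)] at this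
  simp only [Set.mem_ofPred_eq] at hp hq
  omega

lemma dist_le_two_of_three_le_dist_s19 [Fintype V] {d : ℕ} (hconn : G.Connected)
    (hmin : ∀ v, d ≤ (G.neighborSet v).ncard) (hcard : Fintype.card V < 3 * (d + 1))
    {x y z : V} (hxy : 3 ≤ G.dist x y) (hxz : 3 ≤ G.dist x z) : G.dist y z ≤ 2 := by
  by_contra! hyz
  have hunion := Set.ncard_union_eq (Set.disjoint_union_right.2
    ⟨disjoint_setOf_dist_le_one hconn hxy, disjoint_setOf_dist_le_one hconn hxz⟩)
  rw [Set.ncard_union_eq (disjoint_setOf_dist_le_one hconn hyz)] at hunion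
  have hle := Set.ncard_le_card
    ({v | G.dist v x ≤ 1} ∪ ({v | G.dist v y ≤ 1} ∪ {v | G.dist v z ≤ 1}))
  rw [Nat.card_eq_fintype_card] at hle
  have := succ_le_ncard_setOf_dist_le_one hmin x
  have := succ_le_ncard_setOf_dist_le_one hmin y
  have := succ_le_ncard_setOf_dist_le_one hmin z
  omega

lemma two_mul_succ_le_ncard_setOf_dist_le_two [Fintype V] {d : ℕ} (hconn : G.Connected)
    (hmin : ∀ v, d ≤ (G.neighborSet v).ncard) (hcard : Fintype.card V < 3 * (d + 1))
    {u₀ u₂ u₃ u₅ : V} (h₂₃ : G.dist u₂ u₃ ≤ 1) (h₂₅ : 3 ≤ G.dist u₂ u₅)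
    (h₀₃ : 3 ≤ G.dist u₀ u₃) (h₀₅ : 4 ≤ G.dist u₀ u₅) :
    2 * (d + 1) ≤ {x | G.dist x u₃ ≤ 2}.ncard := by
  have hsub₂ : {x | G.dist x u₂ ≤ 1} ⊆ {x | G.dist x u₃ ≤ 2} := fun x hx => by
    have := hconn.dist_triangle (u := x) (v := u₂) (w := u₃)
    simp only [Set.mem_ofPred_eq] at hx ⊢
    omega
  have hsub₅ : {x | G.dist x u₅ ≤ 1} ⊆ {x | G.dist x u₃ ≤ 2} := fun x hx => by
    have := hconn.dist_triangle (u := u₀) (v := x) (w := u₅)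
    simp only [Set.mem_ofPred_eq] at hx ⊢
    rw [dist_comm]
    exact dist_le_two_of_three_le_dist_s19 hconn hmin hcard h₀₃ (by omega)
  calc 2 * (d + 1)
      ≤ {x | G.dist x u₂ ≤ 1}.ncard + {x | G.dist x u₅ ≤ 1}.ncard := by
        have := succ_le_ncard_setOf_dist_le_one hmin u₂
        have := succ_le_ncard_setOf_dist_le_one hmin u₅
        omega
    _ = ({x | G.dist x u₂ ≤ 1} ∪ {x | G.dist x u₅ ≤ 1}).ncard :=
        (Set.ncard_union_eq (disjoint_setOf_dist_le_one hconn h₂₅)).symm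
    _ ≤ {x | G.dist x u₃ ≤ 2}.ncard := Set.ncard_le_ncard (Set.union_subset hsub₂ hsub₅)

lemma ncard_sdiff_add_two_mul_succ_le [Fintype V] {d : ℕ} (hconn : G.Connected)
    (hmin : ∀ v, d ≤ (G.neighborSet v).ncard) (hcard : Fintype.card V < 3 * (d + 1))
    {u₀ u₂ u₃ u₅ : V} (h₂₃ : G.dist u₂ u₃ ≤ 1) (h₂₅ : 3 ≤ G.dist u₂ u₅)
    (h₀₃ : 3 ≤ G.dist u₀ u₃) (h₀₅ : 4 ≤ G.dist u₀ u₅) :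
    ({x | G.dist x u₂ ≤ 2} \ {x | G.dist x u₃ ≤ 2}).ncard + 2 * (d + 1) ≤ Fintype.card V := by
  have hball := two_mul_succ_le_ncard_setOf_dist_le_two hconn hmin hcard h₂₃ h₂₅ h₀₃ h₀₅
  have hsum := Set.ncard_sdiff_add_ncard {x | G.dist x u₂ ≤ 2} {x | G.dist x u₃ ≤ 2}
  have hle := Set.ncard_le_card ({x | G.dist x u₂ ≤ 2} ∪ {x | G.dist x u₃ ≤ 2})
  rw [Nat.card_eq_fintype_card] at hle
  omega

lemma ncard_neighborSet_add_ncard_compl_add_one [Fintype V] (H : SimpleGraph V) (v : V) :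
    (H.neighborSet v).ncard + (Hᶜ.neighborSet v).ncard + 1 = Fintype.card V := by
  rw [← Set.ncard_union_eq (H.compl_neighborSet_disjoint v),
    H.neighborSet_union_compl_neighborSet_eq]
  simpa using Set.ncard_compl_add_ncard {v}

lemma sum_ncard_neighborSet_compl_le [Fintype V] (H : SimpleGraph V) (A C : Set V)
    (hAC : ∀ x y, Hᶜ.Adj x y → x ∈ A ∧ y ∈ C ∨ x ∈ C ∧ y ∈ A) :
    ∑ v, (Hᶜ.neighborSet v).ncard ≤ 2 * A.ncard * C.ncard := by
  classical
  have hv : ∀ v, (Hᶜ.neighborSet v).ncard ≤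
      (if v ∈ A then C.ncard else 0) + (if v ∈ C then A.ncard else 0) := fun v => by
    have hsub : Hᶜ.neighborSet v ⊆ (if v ∈ A then C else ∅) ∪ (if v ∈ C then A else ∅) := by
      intro y hy
      rcases hAC v y hy with ⟨hvA, hyC⟩ | ⟨hvC, hyA⟩
      · left; simp [hvA, hyC]
      · right; simp [hvC, hyA]
    calc _ ≤ _ := Set.ncard_le_ncard hsub
      _ ≤ _ := Set.ncard_union_le _ _
      _ = _ := by split_ifs <;> simp
  calc ∑ v, (Hᶜ.neighborSet v).ncard
      ≤ ∑ v, ((if v ∈ A then C.ncard else 0) + (if v ∈ C then A.ncard else 0)) :=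
        Finset.sum_le_sum fun v _ => hv v
    _ = A.ncard * C.ncard + C.ncard * A.ncard := by
        simp [Finset.sum_add_distrib, Finset.sum_ite, Set.ncard_eq_toFinset_card']
    _ = 2 * A.ncard * C.ncard := by ring

lemma sum_ncard_neighborSet_ge [Fintype V] (H : SimpleGraph V) (A C : Set V)
    (hAC : ∀ x y, Hᶜ.Adj x y → x ∈ A ∧ y ∈ C ∨ x ∈ C ∧ y ∈ A) :
    (Fintype.card V : ℝ) * (Fintype.card V - 1) - 2 * A.ncard * C.ncard ≤
      ∑ v, ((H.neighborSet v).ncard : ℝ) := by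
  have hsum : ∑ v, (H.neighborSet v).ncard + ∑ v, (Hᶜ.neighborSet v).ncard +
      Fintype.card V = Fintype.card V * Fintype.card V := by
    have := Finset.sum_congr (s₁ := Finset.univ) rfl fun v _ =>
      ncard_neighborSet_add_ncard_compl_add_one H v
    rwa [Finset.sum_add_distrib, Finset.sum_add_distrib, Finset.sum_const, Finset.sum_const,
      Finset.card_univ, smul_eq_mul, smul_eq_mul, mul_one] at this
  have hcompl := sum_ncard_neighborSet_compl_le H A C hAC
  have hsumℝ := congrArg (Nat.cast (R := ℝ)) hsum
  have hcomplℝ : ((∑ v, (Hᶜ.neighborSet v).ncard : ℕ) : ℝ) ≤ 2 * A.ncard * C.ncard := by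
    exact_mod_cast hcompl
  push_cast at hsumℝ hcomplℝ
  linarith

lemma mem_sdiff_of_compl_power_four_adj (hconn : G.Connected) {u v : V}
    (hcov : {x | G.dist x u ≤ 2} ∪ {x | G.dist x v ≤ 2} = Set.univ) {x y : V}
    (hxy : (G.power 4)ᶜ.Adj x y) :
    x ∈ {x | G.dist x u ≤ 2} \ {x | G.dist x v ≤ 2} ∧
        y ∈ {x | G.dist x v ≤ 2} \ {x | G.dist x u ≤ 2} ∨
      x ∈ {x | G.dist x v ≤ 2} \ {x | G.dist x u ≤ 2} ∧
        y ∈ {x | G.dist x u ≤ 2} \ {x | G.dist x v ≤ 2} := by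
  obtain ⟨hne, hnadj⟩ := (compl_adj _ _ _).1 hxy
  have hfar (z : V) (hx : G.dist x z ≤ 2) (hy : G.dist y z ≤ 2) : False :=
    hnadj ⟨hne, dist_le_four_of_dist_le_two hconn hx hy⟩
  have hx : x ∈ {x | G.dist x u ≤ 2} ∪ {x | G.dist x v ≤ 2} := hcov ▸ Set.mem_univ x
  have hy : y ∈ {x | G.dist x u ≤ 2} ∪ {x | G.dist x v ≤ 2} := hcov ▸ Set.mem_univ y
  simp only [Set.mem_union, Set.mem_sdiff, Set.mem_ofPred_eq] at hx hy ⊢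
  have := hfar u
  have := hfar v
  tauto

end SimpleGraph

lemma seven_div_three_mul_le_of_le_sub {d n a c : ℝ} (h8 : 8 * d ≤ 3 * n)
    (h9 : 3 * n ≤ 9 * d) (ha0 : 0 ≤ a) (hc0 : 0 ≤ c)
    (ha : a ≤ n - 2 * (d + 1)) (hc : c ≤ n - 2 * (d + 1)) :
    7 / 3 * d * n ≤ n * (n - 1) - 2 * a * c := by
  have hac : a * c ≤ (n - 2 * (d + 1)) * (n - 2 * (d + 1)) := mul_le_mul ha hc hc0 (ha0.trans ha)
  nlinarith [mul_nonneg (sub_nonneg.2 h8) (sub_nonneg.2 h9)]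

theorem boundary_case_detail_general {V : Type*} [Fintype V] (G : SimpleGraph V) (d : ℕ)
    (hconn : G.Connected) (hmin : ∀ v : V, d ≤ (G.neighborSet v).ncard)
    (hn1 : 8 * d ≤ 3 * Fintype.card V) (hn2 : 3 * Fintype.card V ≤ 9 * d)
    (w : Fin 6 → V)
    (hgeo : ∀ i j : Fin 6, G.dist (w i) (w j) = ((i : ℤ) - (j : ℤ)).natAbs)
    (hcov : {x : V | G.dist x (w 2) ≤ 2} ∪ {x : V | G.dist x (w 3) ≤ 2} = Set.univ) :
    (({x : V | G.dist x (w 2) ≤ 2} \ {x : V | G.dist x (w 3) ≤ 2}).ncard : ℝ) ≤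
        Fintype.card V - 2 * (d + 1) ∧
    (({x : V | G.dist x (w 3) ≤ 2} \ {x : V | G.dist x (w 2) ≤ 2}).ncard : ℝ) ≤
        Fintype.card V - 2 * (d + 1) ∧
    (Fintype.card V : ℝ) * (Fintype.card V - 1) -
        2 * ({x : V | G.dist x (w 2) ≤ 2} \ {x : V | G.dist x (w 3) ≤ 2}).ncard *
          ({x : V | G.dist x (w 3) ≤ 2} \ {x : V | G.dist x (w 2) ≤ 2}).ncard ≤
      ∑ x : V, (((G.power 4).neighborSet x).ncard : ℝ) ∧
    (7 / 3 * d * Fintype.card V : ℝ) ≤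
      (Fintype.card V : ℝ) * (Fintype.card V - 1) -
        2 * ({x : V | G.dist x (w 2) ≤ 2} \ {x : V | G.dist x (w 3) ≤ 2}).ncard *
          ({x : V | G.dist x (w 3) ≤ 2} \ {x : V | G.dist x (w 2) ≤ 2}).ncard := by
  have hcard : Fintype.card V < 3 * (d + 1) := by omega
  have hA := SimpleGraph.ncard_sdiff_add_two_mul_succ_le hconn hmin hcard
    (u₀ := w 0) (u₂ := w 2) (u₃ := w 3) (u₅ := w 5)
    (by simp [hgeo]) (by simp [hgeo]) (by simp [hgeo]) (by simp [hgeo])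
  have hC := SimpleGraph.ncard_sdiff_add_two_mul_succ_le hconn hmin hcard
    (u₀ := w 5) (u₂ := w 3) (u₃ := w 2) (u₅ := w 0)
    (by simp [hgeo]) (by simp [hgeo]) (by simp [hgeo]) (by simp [hgeo])
  set A := {x : V | G.dist x (w 2) ≤ 2} \ {x : V | G.dist x (w 3) ≤ 2}
  set C := {x : V | G.dist x (w 3) ≤ 2} \ {x : V | G.dist x (w 2) ≤ 2}
  have hAℝ : (A.ncard : ℝ) ≤ Fintype.card V - 2 * (d + 1) := by
    rw [le_sub_iff_add_le]; exact_mod_cast hA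
  have hCℝ : (C.ncard : ℝ) ≤ Fintype.card V - 2 * (d + 1) := by
    rw [le_sub_iff_add_le]; exact_mod_cast hC
  exact ⟨hAℝ, hCℝ,
    SimpleGraph.sum_ncard_neighborSet_ge _ _ _ fun _ _ =>
      SimpleGraph.mem_sdiff_of_compl_power_four_adj hconn hcov,
    seven_div_three_mul_le_of_le_sub (by exact_mod_cast hn1) (by exact_mod_cast hn2)
      (Nat.cast_nonneg _) (Nat.cast_nonneg _) hAℝ hCℝ⟩

theorem boundary_case_detail {V : Type*} [Fintype V] (G : SimpleGraph V) (d : ℕ)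
    (hd : 2 ≤ d) (hconn : G.Connected) (hmin : ∀ v : V, d ≤ (G.neighborSet v).ncard)
    (hn1 : 8 * d ≤ 3 * Fintype.card V) (hn2 : 3 * Fintype.card V ≤ 9 * d)
    (w : Fin 6 → V)
    (hgeo : ∀ i j : Fin 6, G.dist (w i) (w j) = ((i : ℤ) - (j : ℤ)).natAbs)
    (hcov : {x : V | G.dist x (w 2) ≤ 2} ∪ {x : V | G.dist x (w 3) ≤ 2} = Set.univ) :
    (({x : V | G.dist x (w 2) ≤ 2} \ {x : V | G.dist x (w 3) ≤ 2}).ncard : ℝ) ≤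
        Fintype.card V - 2 * (d + 1) ∧
    (({x : V | G.dist x (w 3) ≤ 2} \ {x : V | G.dist x (w 2) ≤ 2}).ncard : ℝ) ≤
        Fintype.card V - 2 * (d + 1) ∧
    (Fintype.card V : ℝ) * (Fintype.card V - 1) -
        2 * ({x : V | G.dist x (w 2) ≤ 2} \ {x : V | G.dist x (w 3) ≤ 2}).ncard *
          ({x : V | G.dist x (w 3) ≤ 2} \ {x : V | G.dist x (w 2) ≤ 2}).ncard ≤
      ∑ x : V, (((G.power 4).neighborSet x).ncard : ℝ) ∧
    (7 / 3 * d * Fintype.card V : ℝ) ≤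
      (Fintype.card V : ℝ) * (Fintype.card V - 1) -
        2 * ({x : V | G.dist x (w 2) ≤ 2} \ {x : V | G.dist x (w 3) ≤ 2}).ncard *
          ({x : V | G.dist x (w 3) ≤ 2} \ {x : V | G.dist x (w 2) ≤ 2}).ncard :=
  boundary_case_detail_general G d hconn hmin hn1 hn2 w hgeo hcov
end
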